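/- arXiv:0802.1733 — 5 statements merged into one kernel-verified Lean document; each statement's English description precedes it below -/
import Mathlib

section
/- With Λ and Λ̂ as above, suppose k is a multiple of the length of every directed cycle of Λ. If ℓ̂ is a connected component of Λ̂ whose image under the covering map π is a directed cycle of Λ, then the projection p: (i,s) ↦ i induces a graph isomorphism from ℓ̂ onto the directed k-cycle Δ_k on vertex set ℤ/k with edges (i, i+1). -/
/-!
Since `m ∣ k`, a directed `m`-cycle `f` of `Λ` lifts through any vertex `(i₀, f j₀)` of `Λ̂` to
the directed `k`-cycle `c ↦ (i₀ + c, f (j₀ + c mod m))`, on which `p` is `c ↦ i₀ + c`. Edges of `Λ̂`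
leaving a vertex are unique because `φ` is a function, and edges entering a vertex of the lift
are unique because `φ` is injective on `S'`; so the lift is a whole connected component.
-/

open Relation

theorem Relation.EqvGen.mem_iff_of_forall_rel {α : Type*} {r : α → α → Prop} {T : Set α}
    (hT : ∀ a b, r a b → (a ∈ T ↔ b ∈ T)) {a b : α} (h : EqvGen r a b) : a ∈ T ↔ b ∈ T :=
  (Equivalence.eqvGen_iff (r := fun a b : α => (a ∈ T ↔ b ∈ T))
    ⟨fun _ => Iff.rfl, Iff.symm, Iff.trans⟩).1 (h.mono hT)

theorem Relation.EqvGen.zero_of_forall_rel_add_one {α : Type*} {r : α → α → Prop} {k : ℕ}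
    {g : ZMod k → α} (hg : ∀ c, r (g c) (g (c + 1))) (c : ZMod k) : EqvGen r (g 0) (g c) := by
  obtain ⟨c, rfl⟩ := ZMod.intCast_surjective c
  induction c using Int.induction_on with
  | zero => simpa using EqvGen.refl _
  | succ c ih => exact ih.trans _ _ _ (by simpa using EqvGen.rel _ _ (hg c))
  | pred c ih => exact ih.trans _ _ _ (by simpa using (EqvGen.rel _ _ (hg (-c - 1 : ℤ))).symm)

/-- The edge relation of `Λ̂`. -/
def coverAdj {S : Type*} {k : ℕ} (S' : Set S) (φ : S → S) (x y : ZMod k × S) : Prop :=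
  x.2 ∈ S' ∧ y = (x.1 + 1, φ x.2)

section coverAdj

variable {S : Type*} {S' : Set S} {φ : S → S} {k m : ℕ}

theorem coverAdj.right_unique {x y z : ZMod k × S} (hy : coverAdj S' φ x y)
    (hz : coverAdj S' φ x z) : y = z :=
  hy.2.trans hz.2.symm

theorem coverAdj.left_unique (hφ : Set.InjOn φ S') {x y z : ZMod k × S}
    (hx : coverAdj S' φ x z) (hy : coverAdj S' φ y z) : x = y := by
  obtain ⟨hx₂, rfl⟩ := hx
  obtain ⟨hy₂, h⟩ := hy
  simp only [Prod.mk.injEq, add_left_inj] at h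
  exact Prod.ext h.1 (hφ hx₂ hy₂ h.2)

def cycleLift (hmk : m ∣ k) (f : ZMod m → S) (i₀ : ZMod k) (j₀ : ZMod m) (c : ZMod k) :
    ZMod k × S :=
  (i₀ + c, f (j₀ + ZMod.castHom hmk (ZMod m) c))

variable (hmk : m ∣ k) {f : ZMod m → S} (i₀ : ZMod k) (j₀ : ZMod m)

theorem cycleLift_zero : cycleLift hmk f i₀ j₀ 0 = (i₀, f j₀) := by
  simp [cycleLift]

theorem fst_cycleLift (c : ZMod k) : (cycleLift hmk f i₀ j₀ c).1 = i₀ + c := rfl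

theorem bijOn_fst_range_cycleLift :
    Set.BijOn Prod.fst (Set.range (cycleLift hmk f i₀ j₀)) Set.univ := by
  refine ⟨fun _ _ => trivial, ?_, fun i _ => ⟨_, ⟨i - i₀, rfl⟩, by simp [fst_cycleLift]⟩⟩
  rintro _ ⟨c, rfl⟩ _ ⟨c', rfl⟩ h
  rw [add_left_cancel (a := i₀) h]

variable {i₀ j₀}

theorem coverAdj_cycleLift_add_one (hf : ∀ j, f j ∈ S' ∧ φ (f j) = f (j + 1)) (c : ZMod k) :
    coverAdj S' φ (cycleLift hmk f i₀ j₀ c) (cycleLift hmk f i₀ j₀ (c + 1)) := by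
  refine ⟨(hf _).1, ?_⟩
  simp only [cycleLift, (hf _).2, map_add, map_one, add_assoc]

theorem coverAdj_cycleLift_iff (hf : ∀ j, f j ∈ S' ∧ φ (f j) = f (j + 1)) {c c' : ZMod k} :
    coverAdj S' φ (cycleLift hmk f i₀ j₀ c) (cycleLift hmk f i₀ j₀ c') ↔ c' = c + 1 := by
  refine ⟨fun h => ?_, fun h => h ▸ coverAdj_cycleLift_add_one hmk hf c⟩
  simpa [fst_cycleLift, add_assoc] using congrArg Prod.fst h.2

theorem range_cycleLift_eq_component (hf : ∀ j, f j ∈ S' ∧ φ (f j) = f (j + 1))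
    (hφ : Set.InjOn φ S') :
    Set.range (cycleLift hmk f i₀ j₀) =
      {y | EqvGen (SymmGen (coverAdj S' φ)) (cycleLift hmk f i₀ j₀ 0) y} := by
  have hstep := coverAdj_cycleLift_add_one hmk hf (i₀ := i₀) (j₀ := j₀)
  have hclosed : ∀ a b, coverAdj S' φ a b →
      (a ∈ Set.range (cycleLift hmk f i₀ j₀) ↔ b ∈ Set.range (cycleLift hmk f i₀ j₀)) := by
    refine fun a b hab => ⟨?_, ?_⟩
    · rintro ⟨c, rfl⟩
      exact ⟨c + 1, (hstep c).right_unique hab⟩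
    · rintro ⟨c, rfl⟩
      refine ⟨c - 1, coverAdj.left_unique hφ ?_ hab⟩
      simpa using hstep (c - 1)
  ext y
  refine ⟨?_, fun hy => ((EqvGen.mem_iff_of_forall_rel ?_ hy).1 ⟨0, rfl⟩)⟩
  · rintro ⟨c, rfl⟩
    exact EqvGen.zero_of_forall_rel_add_one (fun c => .inl (hstep c)) c
  · rintro a b (hab | hba)
    exacts [hclosed a b hab, (hclosed b a hba).symm]

end coverAdj

theorem cycle_component_iso_kcycle_general
    (S : Type*) (S' : Set S) (φ : S → S)
    (hinj : Set.InjOn φ S')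
    (k : ℕ)
    (E : S → S → Prop)
    (hE : ∀ a b, E a b ↔ a ∈ S' ∧ φ a = b)
    (Ehat : ZMod k × S → ZMod k × S → Prop)
    (hEhat : ∀ x y, Ehat x y ↔ x.2 ∈ S' ∧ y = (x.1 + 1, φ x.2))
    -- k is a multiple of the length of every directed cycle of Λ
    (hcyc : ∀ (n : ℕ) (f : ZMod (n + 1) → S), Function.Injective f →
      (∀ i, E (f i) (f (i + 1))) → (n + 1) ∣ k)
    -- L is a connected component of Λ̂
    (L : Set (ZMod k × S))
    (hL : ∃ x₀, L = {y | Relation.EqvGen (fun a b => Ehat a b ∨ Ehat b a) x₀ y})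
    -- whose image under π is a directed cycle of Λ
    (himg : ∃ (n : ℕ) (f : ZMod (n + 1) → S), Function.Injective f ∧
      Set.range f = Prod.snd '' L ∧ (∀ i, E (f i) (f (i + 1)))) :
    Set.BijOn Prod.fst L Set.univ ∧
    (∀ x ∈ L, ∀ y ∈ L, Ehat x y ↔ y.1 = x.1 + 1) := by
  obtain rfl : Ehat = coverAdj S' φ := funext₂ fun x y => propext (hEhat x y)
  obtain ⟨x₀, rfl⟩ := hL
  obtain ⟨n, f, hfinj, hfrange, hfE⟩ := himg
  have hf (j : ZMod (n + 1)) : f j ∈ S' ∧ φ (f j) = f (j + 1) := (hE _ _).1 (hfE j)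
  obtain ⟨j₀, hj₀⟩ : x₀.2 ∈ Set.range f := hfrange ▸ ⟨x₀, EqvGen.refl x₀, rfl⟩
  have hmk := hcyc n f hfinj hfE
  have hL := range_cycleLift_eq_component hmk (i₀ := x₀.1) (j₀ := j₀) hf hinj
  rw [cycleLift_zero, hj₀, Prod.mk.eta] at hL
  rw [show (fun a b => coverAdj S' φ a b ∨ coverAdj S' φ b a) = SymmGen (coverAdj S' φ) from rfl,
    ← hL]
  refine ⟨bijOn_fst_range_cycleLift hmk x₀.1 j₀, ?_⟩
  rintro _ ⟨c, rfl⟩ _ ⟨c', rfl⟩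
  rw [coverAdj_cycleLift_iff hmk hf, fst_cycleLift, fst_cycleLift, add_assoc, add_right_inj]

/-- Suppose k is a multiple of the length of every directed cycle of Λ.
If a connected component L of Λ̂ has image under π : (i,s) ↦ s a directed cycle of Λ,
then p : (i,s) ↦ i induces a graph isomorphism from L onto the directed k-cycle Δ_k
(vertex set ℤ/k, edges (i, i+1)). -/
theorem cycle_component_iso_kcycle
    (S : Type*) [Fintype S] (S' S'' : Set S) (φ : S → S)
    (hmap : ∀ s ∈ S', φ s ∈ S'')
    (hinj : Set.InjOn φ S')
    (hsurj : S'' ⊆ φ '' S')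
    (k : ℕ) (hk : 0 < k)
    (E : S → S → Prop)
    (hE : ∀ a b, E a b ↔ a ∈ S' ∧ φ a = b)
    (Ehat : ZMod k × S → ZMod k × S → Prop)
    (hEhat : ∀ x y, Ehat x y ↔ x.2 ∈ S' ∧ y = (x.1 + 1, φ x.2))
    -- k is a multiple of the length of every directed cycle of Λ
    (hcyc : ∀ (n : ℕ) (f : ZMod (n + 1) → S), Function.Injective f →
      (∀ i, E (f i) (f (i + 1))) → (n + 1) ∣ k)
    -- L is a connected component of Λ̂
    (L : Set (ZMod k × S))
    (hL : ∃ x₀, L = {y | Relation.EqvGen (fun a b => Ehat a b ∨ Ehat b a) x₀ y})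
    -- whose image under π is a directed cycle of Λ
    (himg : ∃ (n : ℕ) (f : ZMod (n + 1) → S), Function.Injective f ∧
      Set.range f = Prod.snd '' L ∧ (∀ i, E (f i) (f (i + 1)))) :
    Set.BijOn Prod.fst L Set.univ ∧
    (∀ x ∈ L, ∀ y ∈ L, Ehat x y ↔ y.1 = x.1 + 1) :=
  cycle_component_iso_kcycle_general S S' φ hinj k E hE Ehat hEhat hcyc L hL himg
end

section
/- Let k be a multiple of the length of every directed cycle of Λ and strictly greater than twice the length of every non-closed path of Λ. Then for any two connected components ℓ̂, ℓ̂' of Λ̂, the intersection p(ℓ̂) ∩ p(ℓ̂') of their projections to the k-cycle Δ_k is a connected subgraph of Δ_k. -/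
/-!
Every vertex of Λ̂ has at most one successor. If the forward orbit from a vertex of a component
leaves `S'`, it ends at a sink `(j, e)`, and the component is the set of vertices reaching that
sink; its projection is `{j - d | d ≤ n}` where `n` is the length of a longest path into `e`.
That path starts at a vertex without predecessor, so `2 n < k`. Otherwise the projection is all
of `ℤ/k`. Both kinds of sets contain the shorter arc between any two of their points; this
property survives intersection and makes a set connected.
-/

open Relation Function Set

section CycleArcs

variable {k : ℕ}

def cycleAdjIn (X : Set (ZMod k)) (x y : ZMod k) : Prop :=
  (y = x + 1 ∨ x = y + 1) ∧ x ∈ X ∧ y ∈ X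

instance (X : Set (ZMod k)) : Std.Symm (cycleAdjIn X) where
  symm _ _ h := ⟨h.1.symm, h.2.2, h.2.1⟩

/-- With `≤` rather than `<`, at least one of the two arcs between any two points qualifies. -/
def ContainsShortArcs (X : Set (ZMod k)) : Prop :=
  ∀ a ∈ X, ∀ b ∈ X, 2 * (b - a).val ≤ k → ∀ t ≤ (b - a).val, a + t ∈ X

theorem containsShortArcs_univ : ContainsShortArcs (univ : Set (ZMod k)) :=
  fun _ _ _ _ _ _ _ => mem_univ _

theorem ContainsShortArcs.inter {X Y : Set (ZMod k)} (hX : ContainsShortArcs X)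
    (hY : ContainsShortArcs Y) : ContainsShortArcs (X ∩ Y) :=
  fun a ha b hb h t ht => ⟨hX a ha.1 b hb.1 h t ht, hY a ha.2 b hb.2 h t ht⟩

theorem containsShortArcs_arc {n : ℕ} (hn : 2 * n < k) (j : ZMod k) :
    ContainsShortArcs {i : ZMod k | ∃ d ≤ n, i + d = j} := by
  have : NeZero k := ⟨by omega⟩
  rintro a ⟨d₁, hd₁, rfl⟩ b ⟨d₂, hd₂, hb⟩ h t ht
  rcases le_or_gt d₂ d₁ with hle | hlt
  · have hba : b - a = ((d₁ - d₂ : ℕ) : ZMod k) := by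
      rw [Nat.cast_sub hle]; linear_combination hb
    rw [hba, ZMod.val_cast_of_lt (by omega)] at ht
    exact ⟨d₁ - t, by omega, by push_cast [Nat.cast_sub (show t ≤ d₁ by omega)]; ring⟩
  · have hba : b - a = -((d₂ - d₁ : ℕ) : ZMod k) := by
      rw [Nat.cast_sub hlt.le]; linear_combination hb
    have hne : ((d₂ - d₁ : ℕ) : ZMod k) ≠ 0 := by
      rw [Ne, ZMod.natCast_eq_zero_iff]; exact Nat.not_dvd_of_pos_of_lt (by omega) (by omega)
    rw [hba, ZMod.neg_val, if_neg hne, ZMod.val_cast_of_lt (by omega)] at h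
    omega

theorem reflTransGen_cycleAdjIn_add_natCast {X : Set (ZMod k)} {a : ZMod k} {m : ℕ}
    (h : ∀ t ≤ m, a + t ∈ X) : ReflTransGen (cycleAdjIn X) a (a + m) := by
  induction m with
  | zero => rw [Nat.cast_zero, add_zero]
  | succ m ih =>
    refine (ih fun t ht => h t (by omega)).tail ⟨Or.inl ?_, h m (by omega), h (m + 1) le_rfl⟩
    push_cast; ring

theorem ContainsShortArcs.reflTransGen [NeZero k] {X : Set (ZMod k)} (hX : ContainsShortArcs X) :
    ∀ a ∈ X, ∀ b ∈ X, ReflTransGen (cycleAdjIn X) a b := by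
  have walk : ∀ a ∈ X, ∀ b ∈ X, 2 * (b - a).val ≤ k → ReflTransGen (cycleAdjIn X) a b := by
    intro a ha b hb h
    simpa using reflTransGen_cycleAdjIn_add_natCast (hX a ha b hb h)
  intro a ha b hb
  by_cases h0 : b - a = 0
  · exact walk a ha b hb (by simp [h0])
  rcases le_total (2 * (b - a).val) k with h | h
  · exact walk a ha b hb h
  · refine symm (walk b hb a ha ?_)
    rw [show a - b = -(b - a) by ring, ZMod.neg_val, if_neg h0]
    omega

end CycleArcs

section WeakComponent

variable {α : Type*} {R : α → α → Prop}

def weakComponent (R : α → α → Prop) (x : α) : Set α := {y | EqvGen (SymmGen R) x y}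

theorem mem_weakComponent_of_reflTransGen {x y z : α} (hx : ReflTransGen R x z)
    (hy : ReflTransGen R y z) : y ∈ weakComponent R x :=
  have h : ReflTransGen R ≤ EqvGen (SymmGen R) := fun _ _ h =>
    EqvGen.mono (fun _ _ => Or.inl) _ _ (EqvGen.reflTransGen_le_eqvGen R _ _ h)
  .trans _ _ _ (h _ _ hx) (.symm _ _ (h _ _ hy))

theorem weakComponent_subset {C : Set α} (hC : ∀ a b, R a b → (a ∈ C ↔ b ∈ C)) {x : α}
    (hx : x ∈ C) : weakComponent R x ⊆ C := by
  suffices h : ∀ a b, EqvGen (SymmGen R) a b → (a ∈ C ↔ b ∈ C) from fun y hy => (h x y hy).1 hx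
  intro a b hab
  induction hab with
  | rel a b hab => exact hab.elim (hC a b) fun h => (hC b a h).symm
  | refl => rfl
  | symm _ _ _ ih => exact ih.symm
  | trans _ _ _ _ _ ih₁ ih₂ => exact ih₁.trans ih₂

theorem weakComponent_eq_setOf_reflTransGen_sink (hR : ∀ x y y', R x y → R x y' → y = y')
    {x z : α} (hz : ∀ y, ¬ R z y) (hx : ReflTransGen R x z) :
    weakComponent R x = {y | ReflTransGen R y z} := by
  refine (weakComponent_subset (C := {y | ReflTransGen R y z})
    (fun a b hab => ⟨fun ha => ?_, fun hb => hb.head hab⟩) hx).antisymm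
    fun y hy => mem_weakComponent_of_reflTransGen hx hy
  rcases ha.cases_head with rfl | ⟨c, hac, hc⟩
  · exact absurd hab (hz b)
  · rwa [hR a b c hab hac]

end WeakComponent

section Paths

variable {S : Type*} (S' : Set S) (φ : S → S)

/-- A directed path of length `d` from `t` to `e` in Λ. -/
def ReachesIn : ℕ → S → S → Prop
  | 0, t, e => t = e
  | d + 1, t, e => t ∈ S' ∧ ReachesIn d (φ t) e

variable {S' φ}

theorem reachesIn_iterate {m : ℕ} {s : S} (h : ∀ i < m, φ^[i] s ∈ S') :
    ReachesIn S' φ m s (φ^[m] s) := by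
  induction m generalizing s with
  | zero => rfl
  | succ m ih => exact ⟨h 0 m.succ_pos, ih fun i hi => h (i + 1) (by omega)⟩

namespace ReachesIn

theorem iterate_eq {d : ℕ} {t e : S} (h : ReachesIn S' φ d t e) : φ^[d] t = e := by
  induction d generalizing t with
  | zero => exact h
  | succ d ih => exact ih h.2

theorem iterate_mem {d i : ℕ} {t e : S} (h : ReachesIn S' φ d t e) (hi : i < d) :
    φ^[i] t ∈ S' := by
  induction i generalizing t d with
  | zero => cases d with
    | zero => omega
    | succ d => exact h.1
  | succ i ih => cases d with
    | zero => omega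
    | succ d => exact ih h.2 (by omega)

theorem of_add {i d : ℕ} {t e : S} (h : ReachesIn S' φ (i + d) t e) :
    ReachesIn S' φ d (φ^[i] t) e := by
  induction i generalizing t with
  | zero => simpa using h
  | succ i ih =>
    rw [show i + 1 + d = i + d + 1 by omega] at h
    exact ih h.2

theorem length_unique {d d' : ℕ} {t e : S} (he : e ∉ S') (h : ReachesIn S' φ d t e)
    (h' : ReachesIn S' φ d' t e) : d = d' := by
  induction d generalizing t d' with
  | zero => cases d' with
    | zero => rfl
    | succ d' => exact absurd (h ▸ h'.1) he
  | succ d ih => cases d' with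
    | zero => exact absurd (h' ▸ h.1) he
    | succ d' => exact congrArg (· + 1) (ih h.2 h'.2)

theorem injective_iterate {n : ℕ} {t e : S} (he : e ∉ S') (h : ReachesIn S' φ n t e) :
    Injective fun i : Fin (n + 1) => φ^[i] t := by
  have hsuffix (i : Fin (n + 1)) : ReachesIn S' φ (n - i) (φ^[i] t) e :=
    of_add (by rwa [Nat.add_sub_cancel' (Nat.lt_succ_iff.1 i.2)])
  intro i j (hij : φ^[i] t = φ^[j] t)
  have := length_unique he (hsuffix i) (hij ▸ hsuffix j)
  omega

end ReachesIn

theorem finite_setOf_reachesIn [Finite S] {e : S} (he : e ∉ S') :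
    {d | ∃ t, ReachesIn S' φ d t e}.Finite := by
  have hinj : InjOn Prod.snd {p : ℕ × S | ReachesIn S' φ p.1 p.2 e} := fun p hp q hq h =>
    Prod.ext (ReachesIn.length_unique he hp (h ▸ hq)) h
  exact (((toFinite _).of_finite_image hinj).image Prod.fst).subset
    fun d ⟨t, ht⟩ => ⟨(d, t), ht, rfl⟩

theorem exists_setOf_reachesIn_eq_Iic [Finite S] {e : S} (he : e ∉ S') :
    ∃ n t, ReachesIn S' φ n t e ∧ (∀ y ∈ S', φ y ≠ t) ∧
      {d | ∃ t, ReachesIn S' φ d t e} = Iic n := by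
  set D := {d | ∃ t, ReachesIn S' φ d t e}
  have hbdd : BddAbove D := (finite_setOf_reachesIn he).bddAbove
  obtain ⟨t, ht⟩ : sSup D ∈ D := Nat.sSup_mem ⟨0, e, rfl⟩ hbdd
  refine ⟨sSup D, t, ht, fun y hy hyt => ?_, ?_⟩
  · have := le_csSup hbdd (show sSup D + 1 ∈ D from ⟨y, hy, hyt ▸ ht⟩)
    omega
  · exact Set.ext fun d => ⟨fun hd => le_csSup hbdd hd,
      fun hd => ⟨_, ReachesIn.of_add (i := sSup D - d) (by rwa [Nat.sub_add_cancel hd])⟩⟩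

end Paths

section Lift

variable {S : Type*} (S' : Set S) (φ : S → S) (k : ℕ)

/-- The edge relation of Λ̂. -/
def liftRel (x y : ZMod k × S) : Prop := x.2 ∈ S' ∧ y = (x.1 + 1, φ x.2)

variable {S' φ k}

theorem reflTransGen_liftRel_iff {x y : ZMod k × S} :
    ReflTransGen (liftRel S' φ k) x y ↔ ∃ d : ℕ, x.1 + d = y.1 ∧ ReachesIn S' φ d x.2 y.2 := by
  constructor
  · intro h
    induction h using ReflTransGen.head_induction_on with
    | refl => exact ⟨0, by simp, rfl⟩
    | head hxz _ ih =>
      obtain ⟨hx, rfl⟩ := hxz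
      obtain ⟨d, hd, hr⟩ := ih
      exact ⟨d + 1, by push_cast; linear_combination hd, hx, hr⟩
  · rintro ⟨d, hd, hr⟩
    induction d generalizing x with
    | zero =>
      obtain rfl : x = y := Prod.ext (by simpa using hd) hr
      rfl
    | succ d ih =>
      exact .head ⟨hr.1, rfl⟩ (ih (by push_cast at hd ⊢; linear_combination hd) hr.2)

theorem fst_weakComponent_liftRel_eq_univ [NeZero k] {x : ZMod k × S}
    (h : ∀ m, φ^[m] x.2 ∈ S') : Prod.fst '' weakComponent (liftRel S' φ k) x = univ := by
  refine eq_univ_of_forall fun i => ⟨(x.1 + (i - x.1).val, φ^[(i - x.1).val] x.2), ?_, by simp⟩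
  exact mem_weakComponent_of_reflTransGen
    (reflTransGen_liftRel_iff.2 ⟨_, rfl, reachesIn_iterate fun j _ => h j⟩) .refl

theorem fst_setOf_reflTransGen_liftRel (j : ZMod k) (e : S) :
    Prod.fst '' {y | ReflTransGen (liftRel S' φ k) y (j, e)} =
      {i | ∃ d ∈ {d | ∃ t, ReachesIn S' φ d t e}, i + d = j} := by
  ext i
  constructor
  · rintro ⟨y, hy, rfl⟩
    obtain ⟨d, hd, hyd⟩ := reflTransGen_liftRel_iff.1 hy
    exact ⟨d, ⟨y.2, hyd⟩, hd⟩
  · rintro ⟨d, ⟨s, hs⟩, hd⟩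
    exact ⟨(i, s), reflTransGen_liftRel_iff.2 ⟨d, hd, hs⟩, rfl⟩

theorem containsShortArcs_fst_weakComponent_liftRel [Finite S] [NeZero k]
    (hshort : ∀ n t e, ReachesIn S' φ n t e → e ∉ S' → (∀ y ∈ S', φ y ≠ t) → 2 * n < k)
    (x : ZMod k × S) : ContainsShortArcs (Prod.fst '' weakComponent (liftRel S' φ k) x) := by
  classical
  by_cases hexit : ∃ N, φ^[N] x.2 ∉ S'
  swap
  · push Not at hexit
    rw [fst_weakComponent_liftRel_eq_univ hexit]
    exact containsShortArcs_univ
  set N := Nat.find hexit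
  have he : φ^[N] x.2 ∉ S' := Nat.find_spec hexit
  obtain ⟨n, t, hnt, ht, hD⟩ := exists_setOf_reachesIn_eq_Iic he
  have hx : ReflTransGen (liftRel S' φ k) x (x.1 + N, φ^[N] x.2) :=
    reflTransGen_liftRel_iff.2
      ⟨N, rfl, reachesIn_iterate fun i hi => not_not.1 (Nat.find_min hexit hi)⟩
  have hfun : ∀ a b b', liftRel S' φ k a b → liftRel S' φ k a b' → b = b' :=
    fun _ _ _ hb hb' => hb.2.trans hb'.2.symm
  rw [weakComponent_eq_setOf_reflTransGen_sink hfun (fun y hy => he hy.1) hx,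
    fst_setOf_reflTransGen_liftRel, hD]
  exact containsShortArcs_arc (hshort n t _ hnt he ht) _

end Lift

theorem projections_intersect_connectedly_general
    (S : Type*) [Fintype S] (S' : Set S) (φ : S → S)
    (k : ℕ) (hk : 0 < k)
    (E : S → S → Prop)
    (hE : ∀ a b, E a b ↔ a ∈ S' ∧ φ a = b)
    (Ehat : ZMod k × S → ZMod k × S → Prop)
    (hEhat : ∀ x y, Ehat x y ↔ x.2 ∈ S' ∧ y = (x.1 + 1, φ x.2))
    -- k exceeds twice the length of every non-closed directed path component of Λ
    (hpath : ∀ (n : ℕ) (f : Fin (n + 1) → S), Function.Injective f →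
      (∀ i : Fin n, E (f i.castSucc) (f i.succ)) →
      (∀ x, ¬ E x (f 0)) → (∀ x, ¬ E (f (Fin.last n)) x) → 2 * n < k)
    -- L and L' are connected components of Λ̂
    (L L' : Set (ZMod k × S))
    (hL : ∃ x₀, L = {y | Relation.EqvGen (fun a b => Ehat a b ∨ Ehat b a) x₀ y})
    (hL' : ∃ x₀, L' = {y | Relation.EqvGen (fun a b => Ehat a b ∨ Ehat b a) x₀ y}) :
    ∀ a ∈ (Prod.fst '' L) ∩ (Prod.fst '' L'), ∀ b ∈ (Prod.fst '' L) ∩ (Prod.fst '' L'),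
      Relation.ReflTransGen
        (fun x y : ZMod k => (y = x + 1 ∨ x = y + 1) ∧
          x ∈ (Prod.fst '' L) ∩ (Prod.fst '' L') ∧
          y ∈ (Prod.fst '' L) ∩ (Prod.fst '' L')) a b := by
  have : NeZero k := ⟨hk.ne'⟩
  have hshort (n : ℕ) (t e : S) (h : ReachesIn S' φ n t e) (he : e ∉ S')
      (ht : ∀ y ∈ S', φ y ≠ t) : 2 * n < k :=
    hpath n _ (h.injective_iterate he)
      (fun i => (hE _ _).2 ⟨h.iterate_mem i.2, (iterate_succ_apply' φ i t).symm⟩)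
      (fun y hy => ht y ((hE _ _).1 hy).1 ((hE _ _).1 hy).2)
      (fun y hy => he (h.iterate_eq ▸ ((hE _ _).1 hy).1))
  obtain rfl : Ehat = liftRel S' φ k := by
    ext x y
    exact hEhat x y
  obtain ⟨x, rfl⟩ := hL
  obtain ⟨x', rfl⟩ := hL'
  exact ((containsShortArcs_fst_weakComponent_liftRel hshort x).inter
    (containsShortArcs_fst_weakComponent_liftRel hshort x')).reflTransGen

/-- Let k be a multiple of the length of every directed cycle of Λ and
strictly greater than twice the length of every non-closed path of Λ.  Then for any two
connected components L, L' of Λ̂, the intersection p(L) ∩ p(L') of their projections to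
the k-cycle Δ_k is a connected subgraph of Δ_k (connected as an undirected graph). -/
theorem projections_intersect_connectedly
    (S : Type*) [Fintype S] (S' S'' : Set S) (φ : S → S)
    (hmap : ∀ s ∈ S', φ s ∈ S'')
    (hinj : Set.InjOn φ S')
    (hsurj : S'' ⊆ φ '' S')
    (k : ℕ) (hk : 0 < k)
    (E : S → S → Prop)
    (hE : ∀ a b, E a b ↔ a ∈ S' ∧ φ a = b)
    (Ehat : ZMod k × S → ZMod k × S → Prop)
    (hEhat : ∀ x y, Ehat x y ↔ x.2 ∈ S' ∧ y = (x.1 + 1, φ x.2))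
    -- k is a multiple of the length of every directed cycle of Λ
    (hcyc : ∀ (n : ℕ) (f : ZMod (n + 1) → S), Function.Injective f →
      (∀ i, E (f i) (f (i + 1))) → (n + 1) ∣ k)
    -- k exceeds twice the length of every non-closed directed path component of Λ
    (hpath : ∀ (n : ℕ) (f : Fin (n + 1) → S), Function.Injective f →
      (∀ i : Fin n, E (f i.castSucc) (f i.succ)) →
      (∀ x, ¬ E x (f 0)) → (∀ x, ¬ E (f (Fin.last n)) x) → 2 * n < k)
    -- L and L' are connected components of Λ̂
    (L L' : Set (ZMod k × S))
    (hL : ∃ x₀, L = {y | Relation.EqvGen (fun a b => Ehat a b ∨ Ehat b a) x₀ y})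
    (hL' : ∃ x₀, L' = {y | Relation.EqvGen (fun a b => Ehat a b ∨ Ehat b a) x₀ y}) :
    ∀ a ∈ (Prod.fst '' L) ∩ (Prod.fst '' L'), ∀ b ∈ (Prod.fst '' L) ∩ (Prod.fst '' L'),
      Relation.ReflTransGen
        (fun x y : ZMod k => (y = x + 1 ∨ x = y + 1) ∧
          x ∈ (Prod.fst '' L) ∩ (Prod.fst '' L') ∧
          y ∈ (Prod.fst '' L) ∩ (Prod.fst '' L')) a b :=
  projections_intersect_connectedly_general S S' φ k hk E hE Ehat hEhat hpath L L' hL hL'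
end

section
/- Let m be a labelling function on 2-element subsets of S with values in {2,3,...} ∪ {∞}, and suppose φ: S' → S'' preserves labels: m(s,t) = m(φ(s),φ(t)) for all s,t ∈ S'. With S̄ and ψ_i as above (and k chosen as in the construction), the function m̄ on 2-element subsets of S̄ given by m̄(x,y) = m(s,t) if x = ψ_i(s), y = ψ_i(t) for some i, and m̄(x,y) = ∞ otherwise, is well-defined: if x = ψ_i(s) = ψ_j(s') and y = ψ_i(t) = ψ_j(t'), then m(s,t) = m(s',t'). -/
namespace LWD

variable {S : Type*} (S' : Set S) (φ : S → S)

/-- `a` reaches `b` in exactly `n` forward steps, all within the domain `S'`. -/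
def Reach (a b : S) (n : ℕ) : Prop :=
  (∀ l < n, φ^[l] a ∈ S') ∧ φ^[n] a = b

variable {S' φ}

lemma iter_inj (hinj : Set.InjOn φ S') :
    ∀ (n : ℕ) (a b : S), (∀ l < n, φ^[l] a ∈ S') → (∀ l < n, φ^[l] b ∈ S') →
      φ^[n] a = φ^[n] b → a = b := by
  intro n
  induction n with
  | zero => intro a b _ _ h; simpa using h
  | succ n ih =>
    intro a b ha hb h
    have ha' : ∀ l < n, φ^[l] (φ a) ∈ S' := by
      intro l hl
      rw [← Function.iterate_succ_apply]
      exact ha (l + 1) (by omega)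
    have hb' : ∀ l < n, φ^[l] (φ b) ∈ S' := by
      intro l hl
      rw [← Function.iterate_succ_apply]
      exact hb (l + 1) (by omega)
    have h' : φ^[n] (φ a) = φ^[n] (φ b) := by
      rw [← Function.iterate_succ_apply, ← Function.iterate_succ_apply]; exact h
    have := ih (φ a) (φ b) ha' hb' h'
    exact hinj (ha 0 (by omega)) (hb 0 (by omega)) this

lemma reach_split {a b : S} {p q : ℕ} (h : Reach S' φ a b (p + q)) :
    Reach S' φ a (φ^[p] a) p ∧ Reach S' φ (φ^[p] a) b q := by
  obtain ⟨hch, heq⟩ := h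
  refine ⟨⟨fun l hl => hch l (by omega), rfl⟩, ⟨?_, ?_⟩⟩
  · intro l hl
    rw [← Function.iterate_add_apply]
    exact hch (l + p) (by omega)
  · rw [← Function.iterate_add_apply]
    rw [Nat.add_comm q p]
    exact heq

lemma reach_trans {a b c : S} {p q : ℕ} (h1 : Reach S' φ a b p) (h2 : Reach S' φ b c q) :
    Reach S' φ a c (p + q) := by
  obtain ⟨h1c, h1e⟩ := h1
  obtain ⟨h2c, h2e⟩ := h2
  constructor
  · intro l hl
    rcases Nat.lt_or_ge l p with h | h
    · exact h1c l h
    · have : φ^[l] a = φ^[l - p] b := by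
        rw [← h1e, ← Function.iterate_add_apply]
        congr 1; omega
      rw [this]; exact h2c _ (by omega)
  · rw [Nat.add_comm p q, Function.iterate_add_apply, h1e, h2e]

/-- backward cancellation -/
lemma reach_back_cancel (hinj : Set.InjOn φ S') {a b c : S} {n m : ℕ}
    (h1 : Reach S' φ a b n) (h2 : Reach S' φ c b m) (hmn : m ≤ n) :
    Reach S' φ a c (n - m) := by
  have hn : n = (n - m) + m := by omega
  rw [hn] at h1
  obtain ⟨ha, hab⟩ := reach_split h1
  have : φ^[n - m] a = c := by
    apply iter_inj hinj m _ _ hab.1 h2.1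
    rw [hab.2, h2.2]
  rw [← this]; exact ha

/-- forward cancellation -/
lemma reach_fwd_cancel {a b c : S} {n m : ℕ}
    (h1 : Reach S' φ a b n) (h2 : Reach S' φ a c m) (hmn : n ≤ m) :
    Reach S' φ b c (m - n) := by
  have hm : m = n + (m - n) := by omega
  rw [hm] at h2
  obtain ⟨_, h⟩ := reach_split h2
  rwa [h1.2] at h

lemma iterate_mod {d : ℕ} {x : S} (hd : 0 < d) (hfix : φ^[d] x = x) (l : ℕ) :
    φ^[l] x = φ^[l % d] x := by
  conv_lhs => rw [← Nat.mod_add_div l d]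
  rw [Function.iterate_add_apply, Function.iterate_mul,
    Function.iterate_fixed hfix]

lemma per_of_repeat (hinj : Set.InjOn φ S') {x : S} {a b : ℕ} (hab : a < b)
    (hch : ∀ l < b, φ^[l] x ∈ S') (heq : φ^[a] x = φ^[b] x) :
    (∀ l, φ^[l] x ∈ S') ∧ φ^[b - a] x = x := by
  have key : φ^[b - a] x = x := by
    have h2 : φ^[a] (φ^[b - a] x) = φ^[a] x := by
      rw [← Function.iterate_add_apply, show a + (b - a) = b by omega]
      exact heq.symm
    refine iter_inj hinj a _ x ?_ (fun l hl => hch l (by omega)) h2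
    intro l hl
    rw [← Function.iterate_add_apply]
    exact hch _ (by omega)
  refine ⟨?_, key⟩
  intro l
  rw [iterate_mod (show 0 < b - a by omega) key l]
  have := Nat.mod_lt l (show 0 < b - a by omega)
  exact hch _ (by omega)

lemma cycle_case {k : ℕ} {E : S → S → Prop} (hE : ∀ a b, E a b ↔ a ∈ S' ∧ φ a = b)
    (hcyc : ∀ (n : ℕ) (f : ZMod (n + 1) → S), Function.Injective f →
      (∀ i, E (f i) (f (i + 1))) → (n + 1) ∣ k)
    (hinj : Set.InjOn φ S') {x : S} {d : ℕ} (hd : 0 < d) (hfix : φ^[d] x = x)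
    (hall : ∀ l, φ^[l] x ∈ S') :
    ∃ L, 0 < L ∧ L ∣ k ∧ φ^[L] x = x := by
  classical
  have hex : ∃ p, 0 < p ∧ φ^[p] x = x := ⟨d, hd, hfix⟩
  obtain ⟨L', hL'⟩ : ∃ L', Nat.find hex = L' + 1 :=
    ⟨Nat.find hex - 1, by have := (Nat.find_spec hex).1; omega⟩
  have hLfix : φ^[L' + 1] x = x := by rw [← hL']; exact (Nat.find_spec hex).2
  have hmin : ∀ p, 0 < p → p < L' + 1 → φ^[p] x ≠ x := by
    intro p hp0 hpL hpfix
    exact Nat.find_min hex (by omega) ⟨hp0, hpfix⟩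
  set f : ZMod (L' + 1) → S := fun i => φ^[i.val] x with hf
  have sub : ∀ u v : ℕ, u < v → v < L' + 1 → φ^[u] x = φ^[v] x → False := by
    intro u v huv hvL h
    have := (per_of_repeat hinj huv (fun l _ => hall l) h).2
    exact hmin (v - u) (by omega) (by omega) this
  have finj : Function.Injective f := by
    intro u v h
    rcases lt_trichotomy u.val v.val with hlt | heqv | hlt
    · exact (sub _ _ hlt (ZMod.val_lt v) h).elim
    · exact ZMod.val_injective _ heqv
    · exact (sub _ _ hlt (ZMod.val_lt u) h.symm).elim
  have fedge : ∀ i, E (f i) (f (i + 1)) := by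
    intro i
    rw [hE]
    refine ⟨hall _, ?_⟩
    show φ (φ^[i.val] x) = φ^[(i + 1).val] x
    have hv : (i + 1).val = (i.val + 1) % (L' + 1) := by
      rw [ZMod.val_add, ZMod.val_one_eq_one_mod]
      conv_rhs => rw [Nat.add_mod]
      rw [Nat.mod_eq_of_lt (ZMod.val_lt i)]
    rw [← Function.iterate_succ_apply' φ i.val x, hv,
      ← iterate_mod (show 0 < L' + 1 by omega) hLfix (i.val + 1)]
  exact ⟨L' + 1, by omega, hcyc L' f finj fedge, hLfix⟩

lemma lemD {k : ℕ} {E : S → S → Prop} [Finite S]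
    (hE : ∀ a b, E a b ↔ a ∈ S' ∧ φ a = b)
    (hcyc : ∀ (n : ℕ) (f : ZMod (n + 1) → S), Function.Injective f →
      (∀ i, E (f i) (f (i + 1))) → (n + 1) ∣ k)
    (hpath : ∀ (n : ℕ) (f : Fin (n + 1) → S), Function.Injective f →
      (∀ i : Fin n, E (f i.castSucc) (f i.succ)) →
      (∀ x, ¬ E x (f 0)) → (∀ x, ¬ E (f (Fin.last n)) x) → 2 * n < k)
    (hinj : Set.InjOn φ S') {x y : S} {n : ℕ} (hxy : Reach S' φ x y n) :
    (∃ L, 0 < L ∧ L ∣ k ∧ (∀ l, φ^[l] x ∈ S') ∧ φ^[L] x = x) ∨ 2 * n < k := by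
  classical
  have cyc_of_per : ∀ d : ℕ, 0 < d → (∀ l, φ^[l] x ∈ S') → φ^[d] x = x →
      (∃ L, 0 < L ∧ L ∣ k ∧ (∀ l, φ^[l] x ∈ S') ∧ φ^[L] x = x) := by
    intro d hd hall hfix
    obtain ⟨L, h1, h2, h3⟩ := cycle_case hE hcyc hinj hd hfix hall
    exact ⟨L, h1, h2, hall, h3⟩
  by_cases hfwd : ∀ p, φ^[p] x ∈ S'
  · left
    obtain ⟨a, b, hne, hab⟩ := Finite.exists_ne_map_eq_of_infinite (fun l : ℕ => φ^[l] x)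
    have key : ∀ a b : ℕ, a < b → φ^[a] x = φ^[b] x →
        (∃ L, 0 < L ∧ L ∣ k ∧ (∀ l, φ^[l] x ∈ S') ∧ φ^[L] x = x) := by
      intro a b hlt h
      exact cyc_of_per (b - a) (by omega) hfwd
        (per_of_repeat hinj hlt (fun l _ => hfwd l) h).2
    rcases hne.lt_or_gt with h | h
    · exact key _ _ h hab
    · exact key _ _ h hab.symm
  · have hexp : ∃ p, φ^[p] x ∉ S' := not_forall.mp hfwd
    have hpspec : φ^[Nat.find hexp] x ∉ S' := Nat.find_spec hexp
    set p := Nat.find hexp with hp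
    have hplt : ∀ l < p, φ^[l] x ∈ S' := fun l hl => not_not.mp (Nat.find_min hexp hl)
    have hnp : n ≤ p := by
      by_contra h
      push_neg at h
      exact hpspec (hxy.1 p h)
    by_cases hback : ∀ q : ℕ, ∃ z, (∀ l < q, φ^[l] z ∈ S') ∧ φ^[q] z = x
    · left
      choose ζ h1 h2 using hback
      obtain ⟨a, b, hne, hab⟩ := Finite.exists_ne_map_eq_of_infinite ζ
      have key : ∀ a b : ℕ, a < b → ζ a = ζ b →
          (∃ L, 0 < L ∧ L ∣ k ∧ (∀ l, φ^[l] x ∈ S') ∧ φ^[L] x = x) := by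
        intro a b hlt hzeq
        have hxa : φ^[a] (ζ b) = x := by rw [← hzeq]; exact h2 a
        have hfixx : φ^[b - a] x = x := by
          conv_lhs => rw [← hxa, ← Function.iterate_add_apply, show b - a + a = b from by omega]
          exact h2 b
        have hall : ∀ l, φ^[l] x ∈ S' := by
          intro l
          rw [iterate_mod (show 0 < b - a by omega) hfixx l]
          have hm : l % (b - a) < b - a := Nat.mod_lt _ (by omega)
          rw [← hxa, ← Function.iterate_add_apply]
          exact h1 b _ (by omega)
        exact cyc_of_per (b - a) (by omega) hall hfixx
      rcases hne.lt_or_gt with h | h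
      · exact key _ _ h hab
      · exact key _ _ h hab.symm
    · right
      have hexq : ∃ q, ¬ ∃ z, (∀ l < q, φ^[l] z ∈ S') ∧ φ^[q] z = x := not_forall.mp hback
      have hq0 : Nat.find hexq ≠ 0 := by
        intro h
        apply Nat.find_spec hexq
        rw [h]
        exact ⟨x, by omega, rfl⟩
      set qm := Nat.find hexq - 1 with hqm
      obtain ⟨z, hz1, hz2⟩ : ∃ z, (∀ l < qm, φ^[l] z ∈ S') ∧ φ^[qm] z = x :=
        not_not.mp (Nat.find_min hexq (by omega))
      have hnopred : ∀ w, ¬(w ∈ S' ∧ φ w = z) := by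
        rintro w ⟨hw1, hw2⟩
        apply Nat.find_spec hexq
        refine ⟨w, ?_, ?_⟩
        · intro l hl
          match l with
          | 0 => exact hw1
          | Nat.succ l =>
            rw [Function.iterate_succ_apply, hw2]
            exact hz1 l (by omega)
        · rw [show Nat.find hexq = qm + 1 by omega, Function.iterate_succ_apply, hw2]
          exact hz2
      set q := qm + p with hq
      have hch : ∀ l < q, φ^[l] z ∈ S' := by
        intro l hl
        rcases Nat.lt_or_ge l qm with h | h
        · exact hz1 l h
        · have : φ^[l] z = φ^[l - qm] x := by
            rw [← hz2, ← Function.iterate_add_apply]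
            congr 1
            omega
          rw [this]
          exact hplt _ (by omega)
      have hinjf : ∀ u v : ℕ, u < v → v ≤ q → φ^[u] z ≠ φ^[v] z := by
        intro u v huv hvq heq
        have hzz : φ^[v - u] z = z :=
          (per_of_repeat hinj huv (fun l hl => hch l (by omega)) heq).2
        apply hnopred (φ^[v - u - 1] z)
        refine ⟨hch _ (by omega), ?_⟩
        rw [← Function.iterate_succ_apply' φ (v - u - 1) z, Nat.succ_eq_add_one,
          show v - u - 1 + 1 = v - u from by omega]
        exact hzz
      have hlast : φ^[q] z = φ^[p] x := by
        rw [← hz2, ← Function.iterate_add_apply]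
        congr 1
        omega
      have h2q : 2 * q < k := by
        apply hpath q (fun l : Fin (q + 1) => φ^[l.val] z)
        · intro u v h
          rcases lt_trichotomy u.val v.val with hlt | heqv | hlt
          · exact (hinjf u.val v.val hlt (by omega) h).elim
          · exact Fin.ext heqv
          · exact (hinjf v.val u.val hlt (by omega) h.symm).elim
        · intro i1
          rw [hE]
          refine ⟨hch i1.val i1.isLt, ?_⟩
          show φ (φ^[i1.castSucc.val] z) = φ^[i1.succ.val] z
          rw [Fin.coe_castSucc, Fin.val_succ, Function.iterate_succ_apply' φ i1.val z]
        · intro w hw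
          rw [hE] at hw
          exact hnopred w (by simpa using hw)
        · intro w hw
          rw [hE] at hw
          apply hpspec
          have := hw.1
          simpa [Fin.val_last, hlast] using this
      omega

lemma fix_dvd {L e : ℕ} {x : S} (hfix : φ^[L] x = x) (hdvd : L ∣ e) : φ^[e] x = x := by
  obtain ⟨c, rfl⟩ := hdvd
  rw [Function.iterate_mul]
  exact Function.iterate_fixed hfix c

lemma reach_tail {s s' : S} {n : ℕ} (h : Reach S' φ s s' (n + 1)) :
    Reach S' φ (φ s) s' n := by
  refine ⟨fun l hl => ?_, ?_⟩
  · rw [← Function.iterate_succ_apply]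
    exact h.1 (l + 1) (by omega)
  · rw [← Function.iterate_succ_apply]
    exact h.2

lemma chain_pres {m : S → S → ℕ∞} (hpres : ∀ s ∈ S', ∀ t ∈ S', m s t = m (φ s) (φ t)) :
    ∀ (n : ℕ) (s t s' t' : S), Reach S' φ s s' n → Reach S' φ t t' n → m s t = m s' t' := by
  intro n
  induction n with
  | zero =>
    intro s t s' t' h1 h2
    rw [← h1.2, ← h2.2]
    simp
  | succ n ih =>
    intro s t s' t' h1 h2
    have hs : s ∈ S' := by simpa using h1.1 0 (by omega)
    have ht : t ∈ S' := by simpa using h2.1 0 (by omega)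
    rw [hpres s hs t ht]
    exact ih _ _ _ _ (reach_tail h1) (reach_tail h2)

section Main

variable {k : ℕ} {E : S → S → Prop} [Finite S] {m : S → S → ℕ∞}
variable (hE : ∀ a b, E a b ↔ a ∈ S' ∧ φ a = b)
variable (hcyc : ∀ (n : ℕ) (f : ZMod (n + 1) → S), Function.Injective f →
      (∀ i, E (f i) (f (i + 1))) → (n + 1) ∣ k)
variable (hpath : ∀ (n : ℕ) (f : Fin (n + 1) → S), Function.Injective f →
      (∀ i : Fin n, E (f i.castSucc) (f i.succ)) →
      (∀ x, ¬ E x (f 0)) → (∀ x, ¬ E (f (Fin.last n)) x) → 2 * n < k)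
variable (hinj : Set.InjOn φ S')
variable (hpres : ∀ s ∈ S', ∀ t ∈ S', m s t = m (φ s) (φ t))
variable (hk : 0 < k)

include hE hcyc hpath hinj hpres hk in
lemma main_core_le {s s' t t' : S} {n mm : ℕ}
    (h1 : Reach S' φ s s' n) (h2 : Reach S' φ t t' mm)
    (hcast : (n : ZMod k) = (mm : ZMod k)) (hle : mm ≤ n) :
    m s t = m s' t' := by
  have hdvd : k ∣ n - mm := by
    rw [← ZMod.natCast_eq_zero_iff]
    rw [Nat.cast_sub hle, hcast]
    ring
  rw [show n = mm + (n - mm) from by omega] at h1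
  obtain ⟨h1a, h1b⟩ := reach_split h1
  have hm : m s t = m (φ^[mm] s) t' := chain_pres hpres mm _ _ _ _ h1a h2
  suffices hss : s' = φ^[mm] s by rw [hm, hss]
  rcases Nat.eq_zero_or_pos (n - mm) with h0 | hpos
  · rw [h0] at h1b
    simpa using h1b.2.symm
  · have hge : k ≤ n - mm := Nat.le_of_dvd hpos hdvd
    rcases lemD hE hcyc hpath hinj h1b with ⟨L, hL0, hLk, _, hLfix⟩ | hlt
    · rw [← h1b.2, fix_dvd hLfix (hLk.trans hdvd)]
    · omega

include hE hcyc hpath hinj hpres hk in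
lemma main_core (hsymm : ∀ s t, m s t = m t s) {s s' t t' : S} {n mm : ℕ}
    (h1 : Reach S' φ s s' n) (h2 : Reach S' φ t t' mm)
    (hcast : (n : ZMod k) = (mm : ZMod k)) :
    m s t = m s' t' := by
  rcases le_total mm n with h | h
  · exact main_core_le hE hcyc hpath hinj hpres hk h1 h2 hcast h
  · rw [hsymm s t, hsymm s' t']
    exact main_core_le hE hcyc hpath hinj hpres hk h2 h1 hcast.symm h

include hE hcyc hpath hinj hpres hk in
lemma main_mixed {s s' t t' : S} {n mm : ℕ}
    (h1 : Reach S' φ s s' n) (h2 : Reach S' φ t' t mm)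
    (hcast : (n : ZMod k) + (mm : ZMod k) = 0) :
    m s t = m s' t' := by
  have hdvd : k ∣ n + mm := by
    rw [← ZMod.natCast_eq_zero_iff]
    push_cast
    exact hcast
  rcases Nat.eq_zero_or_pos (n + mm) with h0 | hpos
  · have hn0 : n = 0 := by omega
    have hm0 : mm = 0 := by omega
    subst hn0 hm0
    have e1 : s' = s := by simpa using h1.2.symm
    have e2 : t = t' := by simpa using h2.2.symm
    rw [e1, e2]
  · have hge : k ≤ n + mm := Nat.le_of_dvd hpos hdvd
    rcases lemD hE hcyc hpath hinj h1 with ⟨L, hL0, hLk, hall, hLfix⟩ | hlt1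
    · have hs' : s' = φ^[n] s := h1.2.symm
      have hr1 : Reach S' φ s' (φ^[mm] s') mm := by
        refine ⟨fun l _ => ?_, rfl⟩
        rw [hs', ← Function.iterate_add_apply]
        exact hall _
      have hch := chain_pres hpres mm s' t' _ t hr1 h2
      have hback : φ^[mm] s' = s := by
        rw [hs', ← Function.iterate_add_apply]
        exact fix_dvd hLfix (hLk.trans (by rwa [Nat.add_comm] at hdvd))
      rw [hch, hback]
    · rcases lemD hE hcyc hpath hinj h2 with ⟨L, hL0, hLk, hall, hLfix⟩ | hlt2
      · have ht : t = φ^[mm] t' := h2.2.symm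
        have hr2 : Reach S' φ t (φ^[n] t) n := by
          refine ⟨fun l _ => ?_, rfl⟩
          rw [ht, ← Function.iterate_add_apply]
          exact hall _
        have hch := chain_pres hpres n s t s' _ h1 hr2
        have hback : φ^[n] t = t' := by
          rw [ht, ← Function.iterate_add_apply]
          exact fix_dvd hLfix (hLk.trans hdvd)
        rw [hch, hback]
      · omega

end Main

lemma eqvgen_char {k : ℕ} {r : ZMod k × S → ZMod k × S → Prop}
    (hr : ∀ x y, r x y ↔ x.2 ∈ S' ∧ y = (x.1 + 1, φ x.2)) (hinj : Set.InjOn φ S')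
    {a b : ZMod k × S} (h : Relation.EqvGen r a b) :
    ∃ n : ℕ, (Reach S' φ a.2 b.2 n ∧ b.1 = a.1 + (n : ZMod k)) ∨
      (Reach S' φ b.2 a.2 n ∧ a.1 = b.1 + (n : ZMod k)) := by
  induction h with
  | rel x y hxy =>
    obtain ⟨h1, h2⟩ := (hr x y).mp hxy
    refine ⟨1, Or.inl ⟨⟨fun l hl => ?_, ?_⟩, ?_⟩⟩
    · interval_cases l
      simpa using h1
    · rw [h2]
      simp
    · rw [h2]
      simp
  | refl x => exact ⟨0, Or.inl ⟨⟨fun l hl => by omega, rfl⟩, by simp⟩⟩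
  | symm x y _ ih =>
    obtain ⟨n, h | h⟩ := ih
    · exact ⟨n, Or.inr h⟩
    · exact ⟨n, Or.inl h⟩
  | trans x y z _ _ ih1 ih2 =>
    obtain ⟨n, hn⟩ := ih1
    obtain ⟨mm, hm⟩ := ih2
    rcases hn with ⟨hn1, hn2⟩ | ⟨hn1, hn2⟩ <;> rcases hm with ⟨hm1, hm2⟩ | ⟨hm1, hm2⟩
    · exact ⟨n + mm, Or.inl ⟨reach_trans hn1 hm1, by rw [hm2, hn2]; push_cast; ring⟩⟩
    · rcases le_total mm n with hle | hle
      · refine ⟨n - mm, Or.inl ⟨reach_back_cancel hinj hn1 hm1 hle, ?_⟩⟩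
        have he : x.1 + (n : ZMod k) = z.1 + (mm : ZMod k) := by rw [← hn2, hm2]
        rw [Nat.cast_sub hle]
        linear_combination -he
      · refine ⟨mm - n, Or.inr ⟨reach_back_cancel hinj hm1 hn1 hle, ?_⟩⟩
        have he : x.1 + (n : ZMod k) = z.1 + (mm : ZMod k) := by rw [← hn2, hm2]
        rw [Nat.cast_sub hle]
        linear_combination he
    · rcases le_total n mm with hle | hle
      · refine ⟨mm - n, Or.inl ⟨reach_fwd_cancel hn1 hm1 hle, ?_⟩⟩
        rw [Nat.cast_sub hle, hm2, hn2]
        ring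
      · refine ⟨n - mm, Or.inr ⟨reach_fwd_cancel hm1 hn1 hle, ?_⟩⟩
        rw [Nat.cast_sub hle, hm2, hn2]
        ring
    · exact ⟨mm + n, Or.inr ⟨reach_trans hm1 hn1, by rw [hn2, hm2]; push_cast; ring⟩⟩

end LWD



/-- well-definedness of the labelling m̄ on S̄: let m be a labelling function
on pairs of distinct elements of S with values in {2,3,...} ∪ {∞} = ℕ∞, preserved by φ.
With S̄ = (ℤ/k × S)/∼, ψ_i(s) = [(i,s)], and k as in the construction, if
ψ_i(s) = ψ_j(s') and ψ_i(t) = ψ_j(t') (with ψ_i(s) ≠ ψ_i(t)), then m(s,t) = m(s',t'). -/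
theorem labelling_well_defined
    (S : Type*) [Fintype S] (S' S'' : Set S) (φ : S → S)
    (hmap : ∀ s ∈ S', φ s ∈ S'')
    (hinj : Set.InjOn φ S')
    (hsurj : S'' ⊆ φ '' S')
    (m : S → S → ℕ∞)
    (hsymm : ∀ s t, m s t = m t s)
    (h2 : ∀ s t, s ≠ t → 2 ≤ m s t)
    -- φ preserves labels
    (hpres : ∀ s ∈ S', ∀ t ∈ S', m s t = m (φ s) (φ t))
    (k : ℕ) (hk : 0 < k)
    (E : S → S → Prop)
    (hE : ∀ a b, E a b ↔ a ∈ S' ∧ φ a = b)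
    -- k is a multiple of the length of every directed cycle of Λ
    (hcyc : ∀ (n : ℕ) (f : ZMod (n + 1) → S), Function.Injective f →
      (∀ i, E (f i) (f (i + 1))) → (n + 1) ∣ k)
    -- k exceeds twice the length of every non-closed directed path component of Λ
    (hpath : ∀ (n : ℕ) (f : Fin (n + 1) → S), Function.Injective f →
      (∀ i : Fin n, E (f i.castSucc) (f i.succ)) →
      (∀ x, ¬ E x (f 0)) → (∀ x, ¬ E (f (Fin.last n)) x) → 2 * n < k)
    -- the relation generating the quotient S̄ of ℤ/k × S
    (r : ZMod k × S → ZMod k × S → Prop)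
    (hr : ∀ x y, r x y ↔ x.2 ∈ S' ∧ y = (x.1 + 1, φ x.2))
    (i j : ZMod k) (s s' t t' : S)
    (hst : ¬ Relation.EqvGen r (i, s) (i, t))
    -- ψ_i(s) = ψ_j(s') and ψ_i(t) = ψ_j(t')
    (hx : Relation.EqvGen r (i, s) (j, s'))
    (hy : Relation.EqvGen r (i, t) (j, t')) :
    m s t = m s' t' := by
  obtain ⟨n, hxc⟩ := LWD.eqvgen_char hr hinj hx
  obtain ⟨mm, hyc⟩ := LWD.eqvgen_char hr hinj hy
  rcases hxc with ⟨hR1, hj1⟩ | ⟨hR1, hj1⟩ <;> rcases hyc with ⟨hR2, hj2⟩ | ⟨hR2, hj2⟩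
  · refine LWD.main_core hE hcyc hpath hinj hpres hk hsymm hR1 hR2 ?_
    exact add_left_cancel (hj1.symm.trans hj2)
  · refine LWD.main_mixed hE hcyc hpath hinj hpres hk hR1 hR2 ?_
    have h := hj2
    rw [hj1] at h
    linear_combination -h
  · have h := hj1
    rw [hj2] at h
    have hc : (mm : ZMod k) + (n : ZMod k) = 0 := by linear_combination -h
    have := LWD.main_mixed hE hcyc hpath hinj hpres hk hR2 hR1 hc
    rw [hsymm s t, hsymm s' t']
    exact this
  · have hc : (n : ZMod k) = (mm : ZMod k) := add_left_cancel (hj1.symm.trans hj2)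
    exact (LWD.main_core hE hcyc hpath hinj hpres hk hsymm hR1 hR2 hc).symm
end

section
/- With k chosen as a multiple of the length of every cycle of Λ and strictly greater than the length of every path of Λ, each map ψ_i: S → S̄ (sending s to the equivalence class of (i,s)) is injective. -/
/-!
Λ is a disjoint union of directed cycles and maximal directed paths, since every vertex has at
most one outgoing and (φ being injective on S') at most one incoming edge. If `(i, s) ∼ (i, t)`,
confluence of the one-step relation gives `m ≡ n (mod k)` with `φᵐ s = φⁿ t` along edges of Λ;
cancelling the common part of the walks leaves a walk of length `m - n`, a multiple of `k`, from
`s` to `t`. Such a walk cannot lie on a path of Λ, which is shorter than `k`, so it runs around a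
cycle, whose length divides `k`; hence it returns to `s`, and `t = s`.
-/

open Function Relation

theorem Relation.join_reflTransGen_of_eqvGen {α : Type*} {r : α → α → Prop}
    (hr : ∀ a b c, r a b → r a c → b = c) {x y : α} (h : EqvGen r x y) :
    Join (ReflTransGen r) x y :=
  have hconfl : ∀ a b c, r a b → r a c → ∃ d, ReflGen r b d ∧ ReflTransGen r c d :=
    fun a b c hab hac => ⟨c, hr a b c hab hac ▸ ReflGen.refl, ReflTransGen.refl⟩
  (equivalence_join_reflTransGen hconfl).eqvGen_iff.1 <|
    EqvGen.mono (fun _ b hab => ⟨b, ReflTransGen.single hab, ReflTransGen.refl⟩) _ _ h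

section PartialInjection

variable {S : Type*} {S' : Set S} {φ : S → S}

theorem Set.InjOn.eq_of_iterate_eq (hinj : S'.InjOn φ) {m : ℕ} {x y : S}
    (hx : ∀ j < m, φ^[j] x ∈ S') (hy : ∀ j < m, φ^[j] y ∈ S') (h : φ^[m] x = φ^[m] y) :
    x = y := by
  induction m with
  | zero => exact h
  | succ m ih =>
    rw [iterate_succ_apply', iterate_succ_apply'] at h
    exact ih (fun j hj => hx j (by omega)) (fun j hj => hy j (by omega))
      (hinj (hx m (by omega)) (hy m (by omega)) h)

theorem Set.InjOn.isPeriodicPt_of_iterate_eq (hinj : S'.InjOn φ) {a b : ℕ} {u : S}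
    (hab : a ≤ b) (hu : ∀ j < b, φ^[j] u ∈ S') (h : φ^[a] u = φ^[b] u) :
    IsPeriodicPt φ (b - a) u := by
  refine hinj.eq_of_iterate_eq (m := a) (fun j hj => ?_) (fun j hj => hu j (by omega)) ?_
  · rw [← iterate_add_apply]
    exact hu _ (by omega)
  · rw [← iterate_add_apply, Nat.add_sub_cancel' hab, h]

theorem Set.InjOn.mem_periodicPts_of_card_lt [Fintype S] (hinj : S'.InjOn φ) {u : S} {n : ℕ}
    (hn : Fintype.card S < n) (hu : ∀ j < n, φ^[j] u ∈ S') :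
    u ∈ periodicPts φ ∧ ∀ j, φ^[j] u ∈ S' := by
  obtain ⟨a, b, hne, hab⟩ :=
    Fintype.exists_ne_map_eq_of_card_lt (fun j : Fin n => φ^[j] u) (by simpa using hn)
  wlog hlt : a < b generalizing a b
  · exact this b a hne.symm hab.symm (lt_of_le_of_ne (not_lt.1 hlt) hne.symm)
  have hper := hinj.isPeriodicPt_of_iterate_eq hlt.le (fun j hj => hu j (by omega)) hab
  refine ⟨mk_mem_periodicPts (by omega) hper, fun j => ?_⟩
  rw [← hper.iterate_mod_apply]
  exact hu _ ((Nat.mod_lt _ (by omega)).trans (by omega))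

theorem Set.InjOn.exists_notMem_image_iterate_eq [Fintype S] (hinj : S'.InjOn φ) {s : S}
    (hs : ¬ ∀ j, φ^[j] s ∈ S') :
    ∃ u B, u ∉ φ '' S' ∧ (∀ j < B, φ^[j] u ∈ S') ∧ φ^[B] u = s := by
  classical
  let P : ℕ → Prop := fun B => ∃ u, (∀ j < B, φ^[j] u ∈ S') ∧ φ^[B] u = s
  have hbound : ∀ B, P B → B ≤ Fintype.card S := by
    rintro B ⟨u, hu, rfl⟩
    by_contra! hB
    exact hs fun j => by
      rw [← iterate_add_apply]
      exact (hinj.mem_periodicPts_of_card_lt hB hu).2 _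
  obtain ⟨u, hu, hus⟩ : P (Nat.findGreatest P (Fintype.card S)) :=
    Nat.findGreatest_spec (Nat.zero_le _) ⟨s, fun _ h => absurd h (Nat.not_lt_zero _), rfl⟩
  refine ⟨u, _, ?_, hu, hus⟩
  rintro ⟨v, hv, rfl⟩
  have hext : P (Nat.findGreatest P (Fintype.card S) + 1) := by
    refine ⟨v, fun j hj => ?_, by rwa [iterate_succ_apply]⟩
    cases j with
    | zero => exact hv
    | succ j => rw [iterate_succ_apply]; exact hu j (by omega)
  exact Nat.findGreatest_is_greatest (Nat.lt_succ_self _) (hbound _ hext) hext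

variable {E : S → S → Prop} {k : ℕ}

def CycleLengthsDvd (E : S → S → Prop) (k : ℕ) : Prop :=
  ∀ (n : ℕ) (f : ZMod (n + 1) → S), Injective f → (∀ i, E (f i) (f (i + 1))) → (n + 1) ∣ k

def MaximalPathLengthsLt (E : S → S → Prop) (k : ℕ) : Prop :=
  ∀ (n : ℕ) (f : Fin (n + 1) → S), Injective f → (∀ i : Fin n, E (f i.castSucc) (f i.succ)) →
    (∀ x, ¬ E x (f 0)) → (∀ x, ¬ E (f (Fin.last n)) x) → n < k

theorem minimalPeriod_dvd_of_cycle (hE : ∀ a b, E a b ↔ a ∈ S' ∧ φ a = b)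
    (hcyc : CycleLengthsDvd E k) {s : S} (hs : s ∈ periodicPts φ) (horb : ∀ j, φ^[j] s ∈ S') :
    minimalPeriod φ s ∣ k := by
  obtain ⟨n, hn⟩ := Nat.exists_eq_add_one.2 (minimalPeriod_pos_of_mem_periodicPts hs)
  rw [hn]
  refine hcyc n (fun i => φ^[i.val] s) (fun i j hij => ZMod.val_injective _ ?_)
    fun i => (hE _ _).2 ⟨horb _, ?_⟩
  · exact (iterate_eq_iterate_iff_of_lt_minimalPeriod (by rw [hn]; exact ZMod.val_lt i)
      (by rw [hn]; exact ZMod.val_lt j)).1 hij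
  · rw [← iterate_succ_apply' φ, ← iterate_mod_minimalPeriod_eq, hn, ZMod.val_add,
      ZMod.val_one_eq_one_mod, Nat.add_mod_mod]

theorem lt_of_maximal_path (hinj : S'.InjOn φ) (hE : ∀ a b, E a b ↔ a ∈ S' ∧ φ a = b)
    (hpath : MaximalPathLengthsLt E k)
    {u : S} {N : ℕ} (hstart : u ∉ φ '' S') (hu : ∀ j < N, φ^[j] u ∈ S')
    (hend : φ^[N] u ∉ S') : N < k := by
  have hne : ∀ p q : ℕ, p < q → q ≤ N → φ^[p] u ≠ φ^[q] u := by
    intro p q hpq hqN h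
    have hper := hinj.isPeriodicPt_of_iterate_eq hpq.le (fun j hj => hu j (by omega)) h
    obtain ⟨c, hc⟩ := Nat.exists_eq_add_one.2 (Nat.sub_pos_of_lt hpq)
    have hcycle : φ^[c + 1] u = u := hc ▸ hper
    rw [iterate_succ_apply'] at hcycle
    exact hstart ⟨φ^[c] u, hu c (by omega), hcycle⟩
  refine hpath N (fun j => φ^[j] u) (fun p q hpq => ?_)
    (fun i => (hE _ _).2 ⟨hu i i.isLt, (iterate_succ_apply' φ i u).symm⟩)
    (fun x hx => hstart ⟨x, (hE _ _).1 hx⟩) (fun x hx => hend ((hE _ _).1 hx).1)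
  rcases lt_trichotomy p q with h | h | h
  · exact absurd hpq (hne p q h (Nat.lt_succ_iff.1 q.isLt))
  · exact h
  · exact absurd hpq.symm (hne q p h (Nat.lt_succ_iff.1 p.isLt))

theorem iterate_eq_self_of_dvd [Fintype S] (hinj : S'.InjOn φ)
    (hE : ∀ a b, E a b ↔ a ∈ S' ∧ φ a = b)
    (hcyc : CycleLengthsDvd E k) (hpath : MaximalPathLengthsLt E k)
    {s : S} {d : ℕ} (hs : ∀ j < d, φ^[j] s ∈ S') (hd : k ∣ d) : φ^[d] s = s := by
  by_cases horb : ∀ j, φ^[j] s ∈ S'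
  · have hper := (hinj.mem_periodicPts_of_card_lt (Nat.lt_succ_self _) fun j _ => horb j).1
    exact (isPeriodicPt_minimalPeriod φ s).trans_dvd
      ((minimalPeriod_dvd_of_cycle hE hcyc hper horb).trans hd)
  obtain ⟨u, B, hstart, hu, rfl⟩ := hinj.exists_notMem_image_iterate_eq horb
  rcases d.eq_zero_or_pos with rfl | hd0
  · rfl
  classical
  push Not at horb
  have hdD : d ≤ Nat.find horb := not_lt.1 fun h => Nat.find_spec horb (hs _ h)
  have hlen : B + Nat.find horb < k := by
    refine lt_of_maximal_path hinj hE hpath hstart (fun j hj => ?_) ?_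
    · rcases lt_or_ge j B with hjB | hjB
      · exact hu j hjB
      · rw [← Nat.sub_add_cancel hjB, iterate_add_apply]
        exact not_not.1 (Nat.find_min horb (by omega))
    · rw [add_comm, iterate_add_apply]
      exact Nat.find_spec horb
  have := Nat.le_of_dvd hd0 hd
  omega

theorem eq_of_iterate_eq_of_natCast_eq [Fintype S] (hinj : S'.InjOn φ)
    (hE : ∀ a b, E a b ↔ a ∈ S' ∧ φ a = b)
    (hcyc : CycleLengthsDvd E k) (hpath : MaximalPathLengthsLt E k)
    {m n : ℕ} {s t : S} (hnm : n ≤ m) (hmod : (m : ZMod k) = n)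
    (hs : ∀ j < m, φ^[j] s ∈ S') (ht : ∀ j < n, φ^[j] t ∈ S') (h : φ^[m] s = φ^[n] t) :
    s = t := by
  have hdvd : k ∣ m - n :=
    (Nat.modEq_iff_dvd' hnm).1 ((ZMod.natCast_eq_natCast_iff _ _ _).1 hmod).symm
  have hret : φ^[m - n] s = s :=
    iterate_eq_self_of_dvd hinj hE hcyc hpath (fun j hj => hs j (by omega)) hdvd
  rw [← hret]
  refine hinj.eq_of_iterate_eq (fun j hj => ?_) ht ?_
  · rw [← iterate_add_apply]
    exact hs _ (by omega)
  · rw [← iterate_add_apply, Nat.add_sub_cancel' hnm, h]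

theorem exists_iterate_of_reflTransGen {r : ZMod k × S → ZMod k × S → Prop}
    (hr : ∀ x y, r x y ↔ x.2 ∈ S' ∧ y = (x.1 + 1, φ x.2)) {i : ZMod k} {s : S}
    {x : ZMod k × S} (h : ReflTransGen r (i, s) x) :
    ∃ m : ℕ, (∀ j < m, φ^[j] s ∈ S') ∧ x = (i + m, φ^[m] s) := by
  induction h with
  | refl => exact ⟨0, fun _ h => absurd h (Nat.not_lt_zero _), by simp⟩
  | tail _ hyz ih =>
    obtain ⟨m, hm, rfl⟩ := ih
    obtain ⟨hmem, rfl⟩ := (hr _ _).1 hyz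
    refine ⟨m + 1, fun j hj => ?_, ?_⟩
    · rcases Nat.lt_succ_iff_lt_or_eq.1 hj with hj | rfl
      exacts [hm j hj, hmem]
    · simp [iterate_succ_apply', add_assoc]

end PartialInjection

theorem psi_injective_general
    (S : Type*) [Fintype S] (S' : Set S) (φ : S → S)
    (hinj : Set.InjOn φ S')
    (k : ℕ)
    (E : S → S → Prop)
    (hE : ∀ a b, E a b ↔ a ∈ S' ∧ φ a = b)
    -- k is a multiple of the length of every directed cycle of Λ
    (hcyc : ∀ (n : ℕ) (f : ZMod (n + 1) → S), Function.Injective f →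
      (∀ i, E (f i) (f (i + 1))) → (n + 1) ∣ k)
    -- k exceeds the length of every non-closed directed path component of Λ
    (hpath : ∀ (n : ℕ) (f : Fin (n + 1) → S), Function.Injective f →
      (∀ i : Fin n, E (f i.castSucc) (f i.succ)) →
      (∀ x, ¬ E x (f 0)) → (∀ x, ¬ E (f (Fin.last n)) x) → n < k)
    -- the relation generating the quotient S̄ of ℤ/k × S
    (r : ZMod k × S → ZMod k × S → Prop)
    (hr : ∀ x y, r x y ↔ x.2 ∈ S' ∧ y = (x.1 + 1, φ x.2)) :
    ∀ (i : ZMod k) (s t : S), Relation.EqvGen r (i, s) (i, t) → s = t := by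
  intro i s t h
  have hdet : ∀ a b c, r a b → r a c → b = c := fun a b c hab hac =>
    ((hr a b).1 hab).2.trans ((hr a c).1 hac).2.symm
  obtain ⟨x, hsx, htx⟩ := join_reflTransGen_of_eqvGen hdet h
  obtain ⟨m, hs, rfl⟩ := exists_iterate_of_reflTransGen hr hsx
  obtain ⟨n, ht, hx⟩ := exists_iterate_of_reflTransGen hr htx
  obtain ⟨hi, hst⟩ := Prod.ext_iff.1 hx
  have hmod : (m : ZMod k) = n := add_left_cancel hi
  rcases le_total n m with hnm | hmn
  · exact eq_of_iterate_eq_of_natCast_eq hinj hE hcyc hpath hnm hmod hs ht hst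
  · exact (eq_of_iterate_eq_of_natCast_eq hinj hE hcyc hpath hmn hmod.symm ht hs hst.symm).symm

/-- With k a multiple of the length of every cycle of Λ and strictly greater
than the length of every (non-closed) path of Λ, each map ψ_i : S → S̄ sending s to the
equivalence class of (i,s) in S̄ = (ℤ/k × S)/∼ is injective. -/
theorem psi_injective
    (S : Type*) [Fintype S] (S' S'' : Set S) (φ : S → S)
    (hmap : ∀ s ∈ S', φ s ∈ S'')
    (hinj : Set.InjOn φ S')
    (hsurj : S'' ⊆ φ '' S')
    (k : ℕ) (hk : 0 < k)
    (E : S → S → Prop)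
    (hE : ∀ a b, E a b ↔ a ∈ S' ∧ φ a = b)
    -- k is a multiple of the length of every directed cycle of Λ
    (hcyc : ∀ (n : ℕ) (f : ZMod (n + 1) → S), Function.Injective f →
      (∀ i, E (f i) (f (i + 1))) → (n + 1) ∣ k)
    -- k exceeds the length of every non-closed directed path component of Λ
    (hpath : ∀ (n : ℕ) (f : Fin (n + 1) → S), Function.Injective f →
      (∀ i : Fin n, E (f i.castSucc) (f i.succ)) →
      (∀ x, ¬ E x (f 0)) → (∀ x, ¬ E (f (Fin.last n)) x) → n < k)
    -- the relation generating the quotient S̄ of ℤ/k × S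
    (r : ZMod k × S → ZMod k × S → Prop)
    (hr : ∀ x y, r x y ↔ x.2 ∈ S' ∧ y = (x.1 + 1, φ x.2)) :
    ∀ (i : ZMod k) (s t : S), Relation.EqvGen r (i, s) (i, t) → s = t :=
  psi_injective_general S S' φ hinj k E hE hcyc hpath r hr
end

section
/- The map θ from the fundamental group (at basepoint vertex 0) of the graph of groups over the k-cycle Δ_k (vertex groups V_i ≅ V, edge groups E_i ≅ E, attaching maps copies f_i, g_i of f,g) to the HNN extension G = ⟨V, t | t⁻¹f(e)t = g(e)⟩, defined by sending each v ∈ V_i to the corresponding v ∈ V and each stable letter t_i to t, is an injective group homomorphism whose image equals the kernel of ρ: G → ℤ/k (ρ(V)=0, ρ(t)=1). -/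
/-- The defining relations for the fundamental group of a graph of groups (relative to a
spanning "tree" set `T` of edges), presented on generators `(Σ i, Gv i) ⊕ ε`: vertex-group
multiplication relations, conjugation relations `t_e⁻¹ ι_e(x) t_e = τ_e(x)` for every edge,
and the relations killing the stable letters of tree edges. -/
def gogRels {ι ε : Type*} (Gv : ι → Type*) [∀ i, Group (Gv i)]
    (Ge : ε → Type*) [∀ e, Group (Ge e)]
    (a b : ε → ι) (fa : ∀ e, Ge e →* Gv (a e)) (fb : ∀ e, Ge e →* Gv (b e))
    (T : Set ε) : Set (FreeGroup ((Σ i, Gv i) ⊕ ε)) :=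
  {r | (∃ (i : ι) (v w : Gv i),
          r = FreeGroup.of (Sum.inl ⟨i, v⟩) * FreeGroup.of (Sum.inl ⟨i, w⟩) *
              (FreeGroup.of (Sum.inl ⟨i, v * w⟩))⁻¹) ∨
       (∃ (e : ε) (x : Ge e),
          r = (FreeGroup.of (Sum.inr e))⁻¹ * FreeGroup.of (Sum.inl ⟨a e, fa e x⟩) *
              FreeGroup.of (Sum.inr e) * (FreeGroup.of (Sum.inl ⟨b e, fb e x⟩))⁻¹) ∨
       (∃ e ∈ T, r = FreeGroup.of (Sum.inr e))}

/-- The fundamental group of a graph of groups, relative to a spanning tree `T`. -/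
def gogPi1 {ι ε : Type*} (Gv : ι → Type*) [∀ i, Group (Gv i)]
    (Ge : ε → Type*) [∀ e, Group (Ge e)]
    (a b : ε → ι) (fa : ∀ e, Ge e →* Gv (a e)) (fb : ∀ e, Ge e →* Gv (b e))
    (T : Set ε) : Type _ :=
  PresentedGroup (gogRels Gv Ge a b fa fb T)

instance {ι ε : Type*} (Gv : ι → Type*) [∀ i, Group (Gv i)]
    (Ge : ε → Type*) [∀ e, Group (Ge e)]
    (a b : ε → ι) (fa : ∀ e, Ge e →* Gv (a e)) (fb : ∀ e, Ge e →* Gv (b e))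
    (T : Set ε) : Group (gogPi1 Gv Ge a b fa fb T) :=
  inferInstanceAs (Group (PresentedGroup _))

/-!
The inclusion `θ(P) ≤ ker ρ` is checked on generators. Conversely, every `t ^ n * v * t ^ (-n)`
lies in `θ(P)`, so `t` normalises `θ(P)` and `G = θ(P) * ⟨t⟩`; an element `θ(p) * t ^ m` of
`ker ρ` has `k ∣ m`, and `t ^ k = θ(t₋₁)`.

For injectivity, `G` acts on `ZMod k × P`: `v ∈ V` multiplies the fibre over `i` on the left by
the copy of `v` in `V_i`, and `t` moves the fibre over `i` to the fibre over `i - 1`, multiplying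
on the left by the stable letter `t_{i-1}`. Then `θ(p)` acts on the fibre over `0` as left
multiplication by `p`. In Mathlib's HNN extension `t * f(x) * t⁻¹ = g(x)`, whereas `θ` being a
homomorphism forces `t * g(x) * t⁻¹ = f(x)` as well; by Britton's lemma `g(x) = f(y)` with
`g(y) = f(x)`, which is what makes the action respect the HNN relation.
-/

open Equiv HNNExtension

namespace HNNExtension

variable {G : Type*} [Group G] {A B : Subgroup G} {φ : A ≃* B}

theorem exists_mem_equiv_eq_of_of_eq_conj {b c : G}
    (h : (of c : HNNExtension G A B φ) = t * of b * t⁻¹) :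
    ∃ hb : b ∈ A, (φ ⟨b, hb⟩ : G) = c := by
  have hb : b ∈ A := by
    by_contra hb
    -- Britton's lemma: otherwise the reduced word `t b t⁻¹` would represent an element of `G`.
    let w : NormalWord.ReducedWord G A B :=
      { head := 1
        toList := [(1, b), (-1, 1)]
        chain := List.isChain_pair.2 fun hb' => absurd hb' hb }
    have hw : w.prod φ ∈ (of.range : Subgroup (HNNExtension G A B φ)) :=
      ⟨c, by simp [w, NormalWord.ReducedWord.prod, h, mul_assoc]⟩
    simpa [w] using ReducedWord.toList_eq_nil_of_mem_of_range φ w hw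
  exact ⟨hb, of_injective φ (by rw [equiv_eq_conj, h])⟩

theorem exists_f_eq_and_g_eq_of_of_f_eq_conj {V E : Type*} [Group V] [Group E] {f g : E →* V}
    {φ : f.range ≃* g.range} (hφ : ∀ e : E, (φ ⟨f e, ⟨e, rfl⟩⟩ : V) = g e) {x : E}
    (h : (of (f x) : HNNExtension V f.range g.range φ) = t * of (g x) * t⁻¹) :
    ∃ y, f y = g x ∧ g y = f x := by
  obtain ⟨hgx, hφgx⟩ := exists_mem_equiv_eq_of_of_eq_conj h
  obtain ⟨y, hy⟩ := hgx
  refine ⟨y, hy, ?_⟩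
  rw [← hφ y, ← hφgx]
  congr

end HNNExtension

def fibreMulLeftSubgroup {H X P : Type*} [Group H] [Group P] (π : H →* Perm (X × P))
    (ψ : H →* P) (x : X) : Subgroup H where
  carrier := {h | ∀ r, π h (x, r) = (x, ψ h * r)}
  one_mem' r := by simp
  mul_mem' {a b} ha hb r := by rw [map_mul, Perm.mul_apply, hb r, ha _, map_mul, mul_assoc]
  inv_mem' {a} ha r := by rw [map_inv, Perm.inv_eq_iff_eq, ha _, map_inv, mul_inv_cancel_left]

section CycleGraph

variable {V E : Type*} [Group V] [Group E]

abbrev CyclePi1 (f g : E →* V) (k : ℕ) : Type _ :=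
  gogPi1 (ι := ZMod k) (ε := ZMod k) (fun _ => V) (fun _ => E)
    (fun i => i) (fun i => i + 1) (fun _ => f) (fun _ => g) {e | e ≠ -1}

namespace CyclePi1

section

variable (f g : E →* V) (k : ℕ)

theorem mk_eq_one_of_mem_gogRels {r : FreeGroup ((Σ _ : ZMod k, V) ⊕ ZMod k)}
    (hr : r ∈ gogRels (ι := ZMod k) (ε := ZMod k) (fun _ => V) (fun _ => E)
      (fun i => i) (fun i => i + 1) (fun _ => f) (fun _ => g) {e | e ≠ -1}) :
    (PresentedGroup.mk _ r : CyclePi1 f g k) = 1 :=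
  (QuotientGroup.eq_one_iff r).2 (Subgroup.subset_normalClosure hr)

def vertexHom (i : ZMod k) : V →* CyclePi1 f g k :=
  MonoidHom.mk' (fun v => PresentedGroup.of (Sum.inl ⟨i, v⟩)) fun v w => by
    have h := mk_eq_one_of_mem_gogRels f g k (Or.inl ⟨i, v, w, rfl⟩)
    rw [map_mul, map_mul, map_inv, mul_inv_eq_one] at h
    exact h.symm

def stableLetter (e : ZMod k) : CyclePi1 f g k := PresentedGroup.of (Sum.inr e)

variable {f g k}

theorem stableLetter_eq_one {e : ZMod k} (he : e ≠ -1) : stableLetter f g k e = 1 :=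
  mk_eq_one_of_mem_gogRels f g k (Or.inr (Or.inr ⟨e, he, rfl⟩))

theorem stableLetter_mul_vertexHom (e : ZMod k) (x : E) :
    stableLetter f g k e * vertexHom f g k (e + 1) (g x) =
      vertexHom f g k e (f x) * stableLetter f g k e := by
  have h := mk_eq_one_of_mem_gogRels f g k (Or.inr (Or.inl ⟨e, x, rfl⟩))
  rw [map_mul, map_mul, map_mul, map_inv, map_inv, mul_inv_eq_one, mul_assoc,
    inv_mul_eq_iff_eq_mul] at h
  exact h.symm

theorem mem_of_generators_mem {S : Subgroup (CyclePi1 f g k)}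
    (hv : ∀ i v, vertexHom f g k i v ∈ S) (ht : stableLetter f g k (-1) ∈ S) (p : CyclePi1 f g k) :
    p ∈ S := by
  refine PresentedGroup.generated_by _ S ?_ p
  rintro (⟨i, v⟩ | e)
  · exact hv i v
  · show stableLetter f g k e ∈ S
    by_cases he : e = -1
    · exact he ▸ ht
    · rw [stableLetter_eq_one he]
      exact one_mem S

end

section

variable {f g : E →* V} {k : ℕ} {φ : f.range ≃* g.range}
  {θ : CyclePi1 f g k →* HNNExtension V f.range g.range φ}
  (hθv : ∀ i v, θ (vertexHom f g k i v) = t ^ (i.val : ℤ) * of v * t ^ (-(i.val : ℤ)))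
  (hθt : θ (stableLetter f g k (-1)) = t ^ (k : ℤ))

include hθv in
theorem theta_vertexHom_zero (v : V) : θ (vertexHom f g k 0 v) = of v := by
  simp [hθv]

include hθv hθt in
theorem of_f_eq_conj_of_g [NeZero k] (x : E) :
    (of (f x) : HNNExtension V f.range g.range φ) = t * of (g x) * t⁻¹ := by
  have h := congrArg θ (stableLetter_mul_vertexHom (-1) x)
  rw [map_mul, map_mul, hθt, neg_add_cancel, theta_vertexHom_zero hθv, hθv, ZMod.natCast_val,
    ZMod.cast_neg_one] at h
  have hg : of (g x) = t⁻¹ * of (f x) * t :=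
    calc of (g x) = t ^ (-(k : ℤ)) * (t ^ (k : ℤ) * of (g x)) := by group
      _ = t⁻¹ * of (f x) * t := by rw [h]; group
  rw [hg]
  group

end

section

variable (f g : E →* V) (k : ℕ)

def vertexPerm : V →* Perm (ZMod k × CyclePi1 f g k) where
  toFun v := prodShear (Equiv.refl _) fun i => Equiv.mulLeft (vertexHom f g k i v)
  map_one' := by ext ⟨i, r⟩ <;> simp
  map_mul' v w := by ext ⟨i, r⟩ <;> simp

def shiftPerm : Perm (ZMod k × CyclePi1 f g k) :=
  prodShear (Equiv.subRight 1) fun i => Equiv.mulLeft (stableLetter f g k (i - 1))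

variable {f g k}

@[simp] theorem vertexPerm_apply (v : V) (i : ZMod k) (r : CyclePi1 f g k) :
    vertexPerm f g k v (i, r) = (i, vertexHom f g k i v * r) := rfl

@[simp] theorem shiftPerm_apply (i : ZMod k) (r : CyclePi1 f g k) :
    shiftPerm f g k (i, r) = (i - 1, stableLetter f g k (i - 1) * r) := rfl

@[simp] theorem shiftPerm_inv_apply (i : ZMod k) (r : CyclePi1 f g k) :
    (shiftPerm f g k)⁻¹ (i, r) = (i + 1, (stableLetter f g k i)⁻¹ * r) := by
  simp [Perm.inv_def, shiftPerm]

theorem shiftPerm_mul_vertexPerm {φ : f.range ≃* g.range}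
    (hφ : ∀ e : E, (φ ⟨f e, ⟨e, rfl⟩⟩ : V) = g e) (hfg : ∀ x, ∃ y, f y = g x ∧ g y = f x)
    (a : f.range) :
    shiftPerm f g k * vertexPerm f g k a = vertexPerm f g k (φ a) * shiftPerm f g k := by
  obtain ⟨-, x, rfl⟩ := a
  obtain ⟨y, hfy, hgy⟩ := hfg x
  ext ⟨i, r⟩
  · rfl
  · have h := stableLetter_mul_vertexHom (f := f) (g := g) (i - 1) y
    rw [sub_add_cancel, hgy, hfy] at h
    simp [hφ, ← mul_assoc, h]

theorem inv_shiftPerm_pow_apply_zero {n : ℕ} (hn : n < k) (r : CyclePi1 f g k) :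
    ((shiftPerm f g k)⁻¹ ^ n) (0, r) = ((n : ZMod k), r) := by
  induction n with
  | zero => simp
  | succ n ih =>
    have hne : (n : ZMod k) ≠ -1 := by
      intro h
      have hdvd : ((n + 1 : ℕ) : ZMod k) = 0 := by push_cast; rw [h, neg_add_cancel]
      rw [ZMod.natCast_eq_zero_iff] at hdvd
      exact absurd (Nat.le_of_dvd n.succ_pos hdvd) (by omega)
    rw [pow_succ', Perm.mul_apply, ih (by omega), shiftPerm_inv_apply, stableLetter_eq_one hne]
    simp

theorem shiftPerm_pow_apply_natCast {n : ℕ} (hn : n < k) (r : CyclePi1 f g k) :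
    (shiftPerm f g k ^ n) (n, r) = (0, r) := by
  have h := inv_shiftPerm_pow_apply_zero hn r
  rw [inv_pow, Perm.inv_eq_iff_eq] at h
  exact h.symm

theorem shiftPerm_pow_self_apply_zero [NeZero k] (r : CyclePi1 f g k) :
    (shiftPerm f g k ^ k) (0, r) = (0, stableLetter f g k (-1) * r) := by
  obtain ⟨n, rfl⟩ : ∃ n, k = n + 1 := ⟨k - 1, by have := NeZero.pos k; omega⟩
  have hn : ((n : ℕ) : ZMod (n + 1)) = -1 := eq_neg_of_add_eq_zero_left (ZMod.natCast_self' n)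
  have h := shiftPerm_pow_apply_natCast (f := f) (g := g) n.lt_succ_self
    (stableLetter f g _ (-1) * r)
  rw [hn] at h
  rw [pow_succ, Perm.mul_apply, shiftPerm_apply, zero_sub, h]

end

section

variable {f g : E →* V} {k : ℕ} {φ : f.range ≃* g.range}
  (hφ : ∀ e : E, (φ ⟨f e, ⟨e, rfl⟩⟩ : V) = g e) (hfg : ∀ x, ∃ y, f y = g x ∧ g y = f x)

def hnnPerm : HNNExtension V f.range g.range φ →* Perm (ZMod k × CyclePi1 f g k) :=
  lift (vertexPerm f g k) (shiftPerm f g k) (shiftPerm_mul_vertexPerm hφ hfg)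

variable {θ : CyclePi1 f g k →* HNNExtension V f.range g.range φ}
  (hθv : ∀ i v, θ (vertexHom f g k i v) = t ^ (i.val : ℤ) * of v * t ^ (-(i.val : ℤ)))
  (hθt : θ (stableLetter f g k (-1)) = t ^ (k : ℤ))

include hθv hθt in
theorem hnnPerm_theta_apply_zero [NeZero k] (p : CyclePi1 f g k) (r : CyclePi1 f g k) :
    hnnPerm hφ hfg (θ p) (0, r) = (0, p * r) := by
  refine mem_of_generators_mem
    (S := fibreMulLeftSubgroup ((hnnPerm hφ hfg).comp θ) (MonoidHom.id _) 0) ?_ ?_ p r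
  · intro i v r
    rw [MonoidHom.comp_apply, hθv, map_mul, map_mul, map_zpow, map_zpow, zpow_neg, zpow_natCast,
      hnnPerm, lift_t, lift_of, Perm.mul_apply, Perm.mul_apply, ← inv_pow,
      inv_shiftPerm_pow_apply_zero (ZMod.val_lt i), vertexPerm_apply,
      shiftPerm_pow_apply_natCast (ZMod.val_lt i), ZMod.natCast_zmod_val, MonoidHom.id_apply]
  · intro r
    rw [MonoidHom.comp_apply, hθt, map_zpow, zpow_natCast, hnnPerm, lift_t,
      shiftPerm_pow_self_apply_zero, MonoidHom.id_apply]

include hφ hfg hθv hθt in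
theorem theta_injective [NeZero k] : Function.Injective θ := by
  refine (injective_iff_map_eq_one θ).2 fun p hp => ?_
  have h := hnnPerm_theta_apply_zero hφ hfg hθv hθt p 1
  rw [hp, map_one, Perm.one_apply, mul_one] at h
  exact (congrArg Prod.snd h).symm

end

section

variable {f g : E →* V} {k : ℕ} {φ : f.range ≃* g.range}
  {θ : CyclePi1 f g k →* HNNExtension V f.range g.range φ}
  (hθv : ∀ i v, θ (vertexHom f g k i v) = t ^ (i.val : ℤ) * of v * t ^ (-(i.val : ℤ)))
  (hθt : θ (stableLetter f g k (-1)) = t ^ (k : ℤ))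
  {ρ : HNNExtension V f.range g.range φ →* Multiplicative (ZMod k)}

include hθt in
theorem t_zpow_mem_range {m : ℤ} (hm : (k : ℤ) ∣ m) : t ^ m ∈ θ.range := by
  obtain ⟨q, rfl⟩ := hm
  exact ⟨stableLetter f g k (-1) ^ q, by rw [map_zpow, hθt, zpow_mul]⟩

include hθv hθt in
theorem t_zpow_conj_of_mem_range [NeZero k] (n : ℤ) (v : V) :
    t ^ n * of v * t ^ (-n) ∈ θ.range := by
  -- With `n = k q + r`, this is `θ (t₋₁ ^ q * v * t₋₁ ^ (-q))` for `v` in the vertex group `V_r`.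
  have hn : n = k * (n / k) + ((n : ZMod k).val : ℤ) := by
    rw [ZMod.val_intCast]
    exact (Int.mul_ediv_add_emod n k).symm
  refine ⟨stableLetter f g k (-1) ^ (n / k) * vertexHom f g k n v *
    (stableLetter f g k (-1) ^ (n / k))⁻¹, ?_⟩
  rw [map_mul, map_mul, map_inv, map_zpow, hθt, hθv]
  conv_rhs => rw [hn]
  group

include hθv hθt in
theorem t_zpow_conj_mem_range [NeZero k] (n : ℤ) (p : CyclePi1 f g k) :
    t ^ n * θ p * t ^ (-n) ∈ θ.range := by
  suffices h : p ∈ (θ.range.comap (MulAut.conj (t ^ n)).toMonoidHom).comap θ by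
    simpa only [Subgroup.mem_comap, MulEquiv.coe_toMonoidHom, MulAut.conj_apply, zpow_neg]
      using h
  refine mem_of_generators_mem
    (S := (θ.range.comap (MulAut.conj (t ^ n)).toMonoidHom).comap θ) ?_ ?_ p
  · intro i v
    have h := t_zpow_conj_of_mem_range hθv hθt (n + i.val) v
    simp only [Subgroup.mem_comap, MulEquiv.coe_toMonoidHom, MulAut.conj_apply, hθv]
    convert h using 1
    group
  · simp only [Subgroup.mem_comap, MulEquiv.coe_toMonoidHom, MulAut.conj_apply, hθt]
    convert t_zpow_mem_range hθt (dvd_refl (k : ℤ)) using 1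
    group

include hθv hθt in
theorem zpowers_t_le_normalizer_range [NeZero k] : Subgroup.zpowers t ≤
    Subgroup.normalizer (θ.range : Set (HNNExtension V f.range g.range φ)) := by
  refine Subgroup.zpowers_le.2 (Subgroup.mem_normalizer_iff.2 fun y => ⟨?_, ?_⟩)
  · rintro ⟨p, rfl⟩
    simpa using t_zpow_conj_mem_range hθv hθt 1 p
  · rintro ⟨p, hp⟩
    simpa [hp, mul_assoc] using t_zpow_conj_mem_range hθv hθt (-1) p

include hθv in
theorem range_sup_zpowers_t_eq_top : θ.range ⊔ Subgroup.zpowers t = ⊤ := by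
  refine (Subgroup.eq_top_iff' _).2 fun y => ?_
  induction y using HNNExtension.induction_on with
  | of v => exact Subgroup.mem_sup_left ⟨vertexHom f g k 0 v, theta_vertexHom_zero hθv v⟩
  | t => exact Subgroup.mem_sup_right (Subgroup.mem_zpowers _)
  | mul x y hx hy => exact mul_mem hx hy
  | inv x hx => exact inv_mem hx

include hθv hθt in
theorem range_le_ker (hρv : ∀ v, ρ (of v) = 1) (hρt : ρ t = Multiplicative.ofAdd 1) :
    θ.range ≤ ρ.ker := by
  rintro _ ⟨p, rfl⟩
  refine mem_of_generators_mem (S := ρ.ker.comap θ) (fun i v => ?_) ?_ p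
  · simp [hθv, hρv]
  · rw [Subgroup.mem_comap, MonoidHom.mem_ker, hθt, map_zpow, hρt, ← ofAdd_zsmul]
    simp

include hθv hθt in
theorem ker_le_range [NeZero k] (hρt : ρ t = Multiplicative.ofAdd 1) (hθρ : θ.range ≤ ρ.ker) :
    ρ.ker ≤ θ.range := by
  intro y hy
  have hy' : y ∈ (↑(θ.range ⊔ Subgroup.zpowers t) : Set (HNNExtension V f.range g.range φ)) := by
    rw [range_sup_zpowers_t_eq_top hθv]
    trivial
  rw [Subgroup.coe_mul_of_right_le_normalizer_left _ _ (zpowers_t_le_normalizer_range hθv hθt)]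
    at hy'
  obtain ⟨x, hx, _, ⟨m, rfl⟩, rfl⟩ := hy'
  refine mul_mem hx (t_zpow_mem_range hθt ?_)
  rw [MonoidHom.mem_ker, map_mul, hθρ hx, one_mul, map_zpow, hρt, ← ofAdd_zsmul,
    ofAdd_eq_one, zsmul_one] at hy
  exact (ZMod.intCast_zmod_eq_zero_iff_dvd m k).1 hy

end

end CyclePi1

end CycleGraph

theorem theta_injective_image_kernel_general
    (V E : Type*) [Group V] [Group E]
    (f g : E →* V)
    (φ : f.range ≃* g.range)
    (hφ : ∀ e : E, (φ ⟨f e, ⟨e, rfl⟩⟩ : V) = g e)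
    (k : ℕ) (hk : 0 < k)
    (ρ : HNNExtension V f.range g.range φ →* Multiplicative (ZMod k))
    (hρV : ∀ v : V, ρ (HNNExtension.of v) = 1)
    (hρt : ρ (HNNExtension.t (G := V) (A := f.range) (B := g.range) (φ := φ)) =
      Multiplicative.ofAdd (1 : ZMod k))
    (θ : gogPi1 (ι := ZMod k) (ε := ZMod k) (fun _ => V) (fun _ => E)
        (fun i => i) (fun i => i + 1) (fun _ => f) (fun _ => g) {e | e ≠ -1} →*
      HNNExtension V f.range g.range φ)
    (hθv : ∀ (i : ZMod k) (v : V),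
      θ (PresentedGroup.of (Sum.inl ⟨i, v⟩)) =
        HNNExtension.t ^ (i.val : ℤ) * HNNExtension.of v *
          (HNNExtension.t (G := V) (A := f.range) (B := g.range) (φ := φ)) ^ (-(i.val : ℤ)))
    (hθt : θ (PresentedGroup.of (Sum.inr (-1 : ZMod k))) =
      (HNNExtension.t (G := V) (A := f.range) (B := g.range) (φ := φ)) ^ (k : ℤ)) :
    Function.Injective θ ∧ MonoidHom.range θ = MonoidHom.ker ρ := by
  have : NeZero k := ⟨hk.ne'⟩
  have hfg : ∀ x, ∃ y, f y = g x ∧ g y = f x := fun x =>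
    exists_f_eq_and_g_eq_of_of_f_eq_conj hφ (CyclePi1.of_f_eq_conj_of_g hθv hθt x)
  have hθρ : θ.range ≤ ρ.ker := CyclePi1.range_le_ker hθv hθt hρV hρt
  exact ⟨CyclePi1.theta_injective hφ hfg hθv hθt,
    le_antisymm hθρ (CyclePi1.ker_le_range hθv hθt hρt hθρ)⟩

/-- The map θ from the fundamental group of the graph of groups over the
k-cycle Δ_k (vertex groups V_i ≅ V, edge groups E_i ≅ E, attaching maps copies of f, g) to
the HNN extension G = ⟨V, t | t⁻¹ f(e) t = g(e)⟩, sending each v ∈ V_i to the corresponding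
element v of V and each stable letter t_i to t (expressed in the spanning-tree model: the
generator v ∈ V_i goes to tⁱ v t⁻ⁱ and the remaining stable letter, for the edge from -1
to 0, goes to tᵏ), is an injective homomorphism with image the kernel of the homomorphism
ρ : G → ℤ/k determined by ρ(V) = 0, ρ(t) = 1. -/
theorem theta_injective_image_kernel
    (V E : Type*) [Group V] [Group E]
    (f g : E →* V) (hf : Function.Injective f) (hg : Function.Injective g)
    (φ : f.range ≃* g.range)
    (hφ : ∀ e : E, (φ ⟨f e, ⟨e, rfl⟩⟩ : V) = g e)
    (k : ℕ) (hk : 0 < k)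
    (ρ : HNNExtension V f.range g.range φ →* Multiplicative (ZMod k))
    (hρV : ∀ v : V, ρ (HNNExtension.of v) = 1)
    (hρt : ρ (HNNExtension.t (G := V) (A := f.range) (B := g.range) (φ := φ)) =
      Multiplicative.ofAdd (1 : ZMod k))
    (θ : gogPi1 (ι := ZMod k) (ε := ZMod k) (fun _ => V) (fun _ => E)
        (fun i => i) (fun i => i + 1) (fun _ => f) (fun _ => g) {e | e ≠ -1} →*
      HNNExtension V f.range g.range φ)
    (hθv : ∀ (i : ZMod k) (v : V),
      θ (PresentedGroup.of (Sum.inl ⟨i, v⟩)) =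
        HNNExtension.t ^ (i.val : ℤ) * HNNExtension.of v *
          (HNNExtension.t (G := V) (A := f.range) (B := g.range) (φ := φ)) ^ (-(i.val : ℤ)))
    (hθt : θ (PresentedGroup.of (Sum.inr (-1 : ZMod k))) =
      (HNNExtension.t (G := V) (A := f.range) (B := g.range) (φ := φ)) ^ (k : ℤ)) :
    Function.Injective θ ∧ MonoidHom.range θ = MonoidHom.ker ρ :=
  theta_injective_image_kernel_general V E f g φ hφ k hk ρ hρV hρt θ hθv hθt
end
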